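/- arXiv:2603.17984 — 5 statements merged into one kernel-verified Lean document; each statement's English description precedes it below -/
import Mathlib

section
/- In the independent setting, let π̂0 be a π0-estimator that is coordinatewise nondecreasing in each p-value (i.e. π̂0(p) ≤ π̂0(p') whenever p_i ≤ p'_i for all i). Then for every α ∈ (0,1), the adaptive BH procedure without capping satisfies FDR(ABH_α(π̂0)) ≤ (α/m)·Σ_{i ∈ H0} E[1/π̂0(p̃^{0,i})]. -/
open MeasureTheory ProbabilityTheory
open scoped ENNReal

noncomputable section

open Classical in
/-- `orderStat p k` is the `k`-th smallest value of `p` (1-indexed), with `orderStat p 0 = 0`. -/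
def orderStat {m : ℕ} (p : Fin m → ℝ) (k : ℕ) : ℝ :=
  if k = 0 then 0
  else sInf {t : ℝ | k ≤ (Finset.univ.filter fun i => p i ≤ t).card}

/-- The adaptive BH threshold sequence `t_k = min(κ, α k /(m π̂₀))`, with the
convention `1/0 = +∞` (so that the threshold is `κ` when `π̂₀ = 0`). -/
def bhThresh (m : ℕ) (α κ pi0 : ℝ) (k : ℕ) : ℝ :=
  if pi0 = 0 then κ else min κ (α * k / (m * pi0))

open Classical in
/-- Number of rejections `k̂ = max{k ∈ [0,m] : p_(k) ≤ min(κ, α k/(m π̂₀))}` of the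
adaptive BH procedure at level `α` with capping `κ` and estimated null proportion `pi0`. -/
def khat (m : ℕ) (α κ pi0 : ℝ) (p : Fin m → ℝ) : ℕ :=
  Nat.findGreatest (fun k => orderStat p k ≤ bhThresh m α κ pi0 k) m

open Classical in
/-- Rejection set of the adaptive BH procedure at level `α`, with (possibly data-driven)
capping `kap p` and null-proportion estimator `pihat`. -/
def rejectSet (m : ℕ) (α : ℝ) (pihat kap : (Fin m → ℝ) → ℝ) (p : Fin m → ℝ) :
    Finset (Fin m) :=
  Finset.univ.filter fun i =>
    p i ≤ bhThresh m α (kap p) (pihat p) (khat m α (kap p) (pihat p) p)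

open Classical in
/-- False discovery proportion of the adaptive BH procedure. -/
def FDP (m : ℕ) (H0 : Finset (Fin m)) (α : ℝ) (pihat kap : (Fin m → ℝ) → ℝ)
    (p : Fin m → ℝ) : ℝ :=
  ((H0.filter fun i =>
      p i ≤ bhThresh m α (kap p) (pihat p) (khat m α (kap p) (pihat p) p)).card : ℝ)
    / (max (khat m α (kap p) (pihat p) p) 1 : ℕ)

/-- False discovery rate of the adaptive BH procedure. -/
def FDR {Ω : Type*} [MeasurableSpace Ω] (μ : Measure Ω) (m : ℕ) (H0 : Finset (Fin m))
    (α : ℝ) (pihat kap : (Fin m → ℝ) → ℝ) (p : Ω → Fin m → ℝ) : ℝ≥0∞ :=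
  ∫⁻ ω, ENNReal.ofReal (FDP m H0 α pihat kap (p ω)) ∂μ

/-- Independent multiple-testing setting: `p`-values in `[0,1]`, mutually independent,
super-uniform under the null (`H0`). -/
def IndepSetting {Ω : Type*} [MeasurableSpace Ω] (μ : Measure Ω) (m : ℕ)
    (H0 : Finset (Fin m)) (p : Ω → Fin m → ℝ) : Prop :=
  Measurable p ∧ (∀ ω i, p ω i ∈ Set.Icc (0 : ℝ) 1) ∧
    iIndepFun (fun i ω => p ω i) μ ∧
    ∀ i ∈ H0, ∀ t ∈ Set.Icc (0 : ℝ) 1, μ {ω | p ω i ≤ t} ≤ ENNReal.ofReal t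

/-- Independent multiple-testing setting with (exactly) uniform null `p`-values. -/
def IndepUnifSetting {Ω : Type*} [MeasurableSpace Ω] (μ : Measure Ω) (m : ℕ)
    (H0 : Finset (Fin m)) (p : Ω → Fin m → ℝ) : Prop :=
  Measurable p ∧ (∀ ω i, p ω i ∈ Set.Icc (0 : ℝ) 1) ∧
    iIndepFun (fun i ω => p ω i) μ ∧
    ∀ i ∈ H0, ∀ t ∈ Set.Icc (0 : ℝ) 1, μ {ω | p ω i ≤ t} = ENNReal.ofReal t

section AuxOrderStat

variable {m : ℕ}

lemma orderStat_le_iff {m k : ℕ} (hk : k ≠ 0) (hkm : k ≤ m) (x : Fin m → ℝ) (c : ℝ) :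
    orderStat x k ≤ c ↔ k ≤ (Finset.univ.filter fun i => x i ≤ c).card := by
  have hm : 0 < m := lt_of_lt_of_le (Nat.pos_of_ne_zero hk) hkm
  have hne' : Nonempty (Fin m) := Fin.pos_iff_nonempty.mp hm
  rw [orderStat, if_neg hk]
  set S := {t : ℝ | k ≤ (Finset.univ.filter fun i => x i ≤ t).card} with hS
  have hne : S.Nonempty := by
    refine ⟨Finset.univ.sup' Finset.univ_nonempty x, ?_⟩
    have hft : (Finset.univ.filter fun i => x i ≤ Finset.univ.sup' Finset.univ_nonempty x)
        = Finset.univ :=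
      Finset.filter_true_of_mem fun i _ => Finset.le_sup' x (Finset.mem_univ i)
    simp only [hS, Set.mem_setOf_eq, hft, Finset.card_univ, Fintype.card_fin]
    exact hkm
  have hbdd : BddBelow S := by
    refine ⟨Finset.univ.inf' Finset.univ_nonempty x, fun t ht => ?_⟩
    have hpos : 0 < (Finset.univ.filter fun i => x i ≤ t).card :=
      lt_of_lt_of_le (Nat.pos_of_ne_zero hk) ht
    obtain ⟨j, hj⟩ := Finset.card_pos.mp hpos
    exact le_trans (Finset.inf'_le x (Finset.mem_univ j)) (Finset.mem_filter.mp hj).2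
  constructor
  · intro h
    rcases eq_or_lt_of_le h with heq | hlt
    · by_cases hJ : ∃ j, c < x j
      · set T := Finset.univ.filter (fun j => c < x j) with hT
        have hTne : T.Nonempty := by
          obtain ⟨j, hj⟩ := hJ; exact ⟨j, Finset.mem_filter.mpr ⟨Finset.mem_univ j, hj⟩⟩
        have hcb : c < T.inf' hTne x := by
          rw [Finset.lt_inf'_iff]; intro j hj; exact (Finset.mem_filter.mp hj).2
        obtain ⟨t, htS, htb⟩ := exists_lt_of_csInf_lt hne (heq ▸ hcb)
        have hsub : (Finset.univ.filter fun i => x i ≤ t)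
            ⊆ (Finset.univ.filter fun i => x i ≤ c) := by
          intro j hj
          have hjt := (Finset.mem_filter.mp hj).2
          by_contra hjc
          have hcj : c < x j := lt_of_not_ge fun hle =>
            hjc (Finset.mem_filter.mpr ⟨Finset.mem_univ j, hle⟩)
          have hbj : T.inf' hTne x ≤ x j :=
            Finset.inf'_le x (Finset.mem_filter.mpr ⟨Finset.mem_univ j, hcj⟩)
          exact absurd hjt (not_le.mpr (lt_of_lt_of_le htb hbj))
        exact le_trans htS (Finset.card_le_card hsub)
      · push_neg at hJ
        have hft : (Finset.univ.filter fun i => x i ≤ c) = Finset.univ :=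
          Finset.filter_true_of_mem fun i _ => hJ i
        simp only [hft, Finset.card_univ, Fintype.card_fin]
        exact hkm
    · obtain ⟨t, htS, htc⟩ := exists_lt_of_csInf_lt hne hlt
      refine le_trans htS (Finset.card_le_card ?_)
      exact Finset.monotone_filter_right _ fun j _ hj => le_trans hj (le_of_lt htc)
  · intro h
    exact csInf_le hbdd h

lemma orderStat_of_gt {m k : ℕ} (hk : k ≠ 0) (hmk : m < k) (x : Fin m → ℝ) :
    orderStat x k = 0 := by
  rw [orderStat, if_neg hk]
  have he : {t : ℝ | k ≤ (Finset.univ.filter fun i => x i ≤ t).card} = ∅ := by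
    ext t
    simp only [Set.mem_setOf_eq, Set.mem_empty_iff_false, iff_false, not_le]
    exact lt_of_le_of_lt (le_trans (Finset.card_filter_le _ _)
      (by simp only [Finset.card_univ, Fintype.card_fin, le_refl])) hmk
  rw [he, Real.sInf_empty]

lemma orderStat_mono {m k : ℕ} {x x' : Fin m → ℝ} (h : ∀ i, x i ≤ x' i) :
    orderStat x k ≤ orderStat x' k := by
  rcases eq_or_ne k 0 with rfl | hk
  · simp [orderStat]
  rcases le_or_gt k m with hkm | hmk
  · rw [orderStat_le_iff hk hkm]
    have h2 : orderStat x' k ≤ orderStat x' k := le_refl _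
    rw [orderStat_le_iff hk hkm] at h2
    refine le_trans h2 (Finset.card_le_card ?_)
    exact Finset.monotone_filter_right _ fun j _ hj => le_trans (h j) hj
  · rw [orderStat_of_gt hk hmk, orderStat_of_gt hk hmk]

lemma measurable_orderStat {m k : ℕ} : Measurable fun x : Fin m → ℝ => orderStat x k := by
  rcases eq_or_ne k 0 with rfl | hk
  · simp only [orderStat, if_pos rfl]; exact measurable_const
  rcases le_or_gt k m with hkm | hmk
  · apply measurable_of_Iic
    intro c
    have hpre : (fun x : Fin m → ℝ => orderStat x k) ⁻¹' Set.Iic c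
        = {x : Fin m → ℝ | k ≤ (Finset.univ.filter fun i => x i ≤ c).card} := by
      ext x
      simp only [Set.mem_preimage, Set.mem_Iic, Set.mem_setOf_eq, orderStat_le_iff hk hkm]
    rw [hpre]
    have hcard : Measurable fun x : Fin m → ℝ =>
        (Finset.univ.filter fun i => x i ≤ c).card := by
      have hrw : (fun x : Fin m → ℝ => (Finset.univ.filter fun i => x i ≤ c).card)
          = fun x => ∑ i : Fin m, if x i ≤ c then 1 else 0 := by
        funext x; rw [Finset.card_filter]
      rw [hrw]
      exact Finset.measurable_sum _ fun i _ =>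
        Measurable.ite (measurableSet_le (measurable_pi_apply i) measurable_const)
          measurable_const measurable_const
    exact hcard MeasurableSet.of_discrete
  · have hrw : (fun x : Fin m → ℝ => orderStat x k) = fun _ => (0 : ℝ) := by
      funext x; exact orderStat_of_gt hk hmk x
    rw [hrw]; exact measurable_const

end AuxOrderStat

section AuxKhat

lemma bhThresh_anti {m : ℕ} (hm : 0 < m) {α : ℝ} (hα : 0 ≤ α) (k : ℕ) {pi0 pi0' : ℝ}
    (h0 : 0 ≤ pi0) (h : pi0 ≤ pi0') : bhThresh m α 1 pi0' k ≤ bhThresh m α 1 pi0 k := by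
  unfold bhThresh
  rcases eq_or_lt_of_le h0 with heq | hpos
  · rw [if_pos heq.symm]
    split
    · exact le_refl 1
    · exact min_le_left _ _
  · rw [if_neg (ne_of_gt hpos), if_neg (ne_of_gt (lt_of_lt_of_le hpos h))]
    refine min_le_min (le_refl 1) ?_
    have hmp : (0:ℝ) < (m:ℝ) * pi0 := mul_pos (by exact_mod_cast hm) hpos
    refine div_le_div_of_nonneg_left (by positivity) hmp ?_
    exact mul_le_mul_of_nonneg_left h (Nat.cast_nonneg m)

lemma khat_le_m {m : ℕ} {α κ pi0 : ℝ} {x : Fin m → ℝ} : khat m α κ pi0 x ≤ m :=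
  Nat.findGreatest_le m

lemma khat_anti {m : ℕ} (hm : 0 < m) {α : ℝ} (hα : 0 ≤ α) (pihat : (Fin m → ℝ) → ℝ)
    (hnn : ∀ q, 0 ≤ pihat q) (hmono : ∀ q q' : Fin m → ℝ, (∀ i, q i ≤ q' i) → pihat q ≤ pihat q')
    {x x' : Fin m → ℝ} (h : ∀ i, x i ≤ x' i) :
    khat m α 1 (pihat x') x' ≤ khat m α 1 (pihat x) x := by
  unfold khat
  rcases eq_or_ne (Nat.findGreatest (fun k => orderStat x' k ≤ bhThresh m α 1 (pihat x') k) m) 0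
    with h0 | h0
  · rw [h0]; exact Nat.zero_le _
  have hspec := (Nat.findGreatest_eq_iff.mp
    (rfl : Nat.findGreatest (fun k => orderStat x' k ≤ bhThresh m α 1 (pihat x') k) m = _)).2.1 h0
  refine Nat.le_findGreatest (Nat.findGreatest_le m) ?_
  set k' := Nat.findGreatest (fun k => orderStat x' k ≤ bhThresh m α 1 (pihat x') k) m with hk'
  calc orderStat x k'
      ≤ orderStat x' k' := orderStat_mono h
    _ ≤ bhThresh m α 1 (pihat x') k' := hspec
    _ ≤ bhThresh m α 1 (pihat x) k' :=
        bhThresh_anti hm hα _ (hnn x) (hmono x x' h)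

lemma measurable_bhThreshF {m : ℕ} (α : ℝ) (k : ℕ) {pihat : (Fin m → ℝ) → ℝ}
    (hpm : Measurable pihat) :
    Measurable fun x : Fin m → ℝ => bhThresh m α 1 (pihat x) k := by
  unfold bhThresh
  refine Measurable.ite (hpm (measurableSet_singleton 0)) measurable_const ?_
  exact measurable_const.min (measurable_const.div (measurable_const.mul hpm))

lemma measurable_khatF {m : ℕ} (α : ℝ) {pihat : (Fin m → ℝ) → ℝ} (hpm : Measurable pihat) :
    Measurable fun x : Fin m → ℝ => khat m α 1 (pihat x) x := by
  unfold khat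
  refine measurable_findGreatest fun k _ => ?_
  exact measurableSet_le measurable_orderStat (measurable_bhThreshF α k hpm)

end AuxKhat

section CoreLemma

open scoped ENNReal

lemma core_lemma (ν : MeasureTheory.Measure ℝ)
    (hsup : ∀ t ∈ Set.Icc (0:ℝ) 1, ν (Set.Iic t) ≤ ENNReal.ofReal t)
    (g : ℝ → ℕ) (hg : Antitone g) {c : ℝ} (hc : 0 ≤ c) :
    ∫⁻ u, (if u ≤ min 1 (c * (g u : ℝ)) then ((max (g u) 1 : ℕ) : ℝ≥0∞)⁻¹ else 0) ∂ν
      ≤ ENNReal.ofReal c := by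
  set A : Set ℝ := {u | u ≤ min 1 (c * (g u : ℝ))} with hA
  have h0A : (0:ℝ) ∈ A := by
    simp only [hA, Set.mem_setOf_eq, le_min_iff]
    exact ⟨zero_le_one, mul_nonneg hc (Nat.cast_nonneg _)⟩
  obtain ⟨u₀, hu₀A, hu₀⟩ : sInf (g '' A) ∈ g '' A :=
    Nat.sInf_mem ⟨g 0, Set.mem_image_of_mem g h0A⟩
  set G := sInf (g '' A) with hG
  have hGle : ∀ u ∈ A, G ≤ g u := fun u hu => Nat.sInf_le (Set.mem_image_of_mem g hu)
  set K : ℕ := max G 1 with hK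
  set B : ℝ := min 1 (c * K) with hB
  have hAB : ∀ u ∈ A, u ≤ B := by
    intro u hu
    have h1 : u ≤ 1 := le_trans hu (min_le_left _ _)
    have h2 : u ≤ c * G := by
      rcases le_total u u₀ with hle | hle
      · calc u ≤ u₀ := hle
          _ ≤ c * (g u₀ : ℝ) := le_trans hu₀A (min_le_right _ _)
          _ = c * G := by rw [hu₀]
      · have hgu : g u = G := le_antisymm (hu₀ ▸ hg hle) (hGle u hu)
        calc u ≤ c * (g u : ℝ) := le_trans hu (min_le_right _ _)
          _ = c * G := by rw [hgu]
    refine le_min h1 (le_trans h2 ?_)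
    refine mul_le_mul_of_nonneg_left ?_ hc
    exact_mod_cast le_max_left G 1
  have hKg : ∀ u ∈ A, ((max (g u) 1 : ℕ) : ℝ≥0∞)⁻¹ ≤ ((K : ℕ) : ℝ≥0∞)⁻¹ := by
    intro u hu
    refine ENNReal.inv_le_inv.mpr ?_
    exact_mod_cast max_le_max (hGle u hu) (le_refl 1)
  have hpt : ∀ u, (if u ≤ min 1 (c * (g u : ℝ)) then ((max (g u) 1 : ℕ) : ℝ≥0∞)⁻¹ else 0)
      ≤ (Set.Iic B).indicator (fun _ => ((K : ℕ) : ℝ≥0∞)⁻¹) u := by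
    intro u
    split
    · next h =>
      have hmem : u ∈ Set.Iic B := hAB u h
      rw [Set.indicator_of_mem hmem]
      exact hKg u h
    · next h => simp
  have hK0 : ((K : ℕ) : ℝ≥0∞) ≠ 0 := by
    exact_mod_cast Nat.pos_iff_ne_zero.mp (lt_of_lt_of_le Nat.one_pos (le_max_right G 1))
  calc ∫⁻ u, (if u ≤ min 1 (c * (g u : ℝ)) then ((max (g u) 1 : ℕ) : ℝ≥0∞)⁻¹ else 0) ∂ν
      ≤ ∫⁻ u, (Set.Iic B).indicator (fun _ => ((K : ℕ) : ℝ≥0∞)⁻¹) u ∂ν :=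
        MeasureTheory.lintegral_mono hpt
    _ = ((K : ℕ) : ℝ≥0∞)⁻¹ * ν (Set.Iic B) :=
        MeasureTheory.lintegral_indicator_const measurableSet_Iic _
    _ ≤ ((K : ℕ) : ℝ≥0∞)⁻¹ * ENNReal.ofReal B := by
        refine mul_le_mul_right (hsup B ⟨?_, min_le_left _ _⟩) _
        exact le_min zero_le_one (by positivity)
    _ ≤ ((K : ℕ) : ℝ≥0∞)⁻¹ * (ENNReal.ofReal c * ((K : ℕ) : ℝ≥0∞)) := by
        refine mul_le_mul_right ?_ _
        calc ENNReal.ofReal B ≤ ENNReal.ofReal (c * K) :=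
              ENNReal.ofReal_le_ofReal (min_le_right _ _)
          _ = ENNReal.ofReal c * ENNReal.ofReal (K : ℝ) := ENNReal.ofReal_mul hc
          _ = ENNReal.ofReal c * ((K : ℕ) : ℝ≥0∞) := by rw [ENNReal.ofReal_natCast]
    _ = ENNReal.ofReal c := by
        rw [mul_comm (ENNReal.ofReal c), ← mul_assoc, ENNReal.inv_mul_cancel hK0
          (ENNReal.natCast_ne_top K), one_mul]

end CoreLemma

/-- Theorem 1(i), independent setting: if the null-proportion estimator
`pihat` is coordinatewise nondecreasing in each `p`-value, then the adaptive BH procedure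
without capping satisfies
`FDR(ABH_α(π̂₀)) ≤ (α/m) Σ_{i ∈ H0} E[1/π̂₀(p̃^{0,i})]`. -/
theorem statement0 {Ω : Type*} [MeasurableSpace Ω] (μ : Measure Ω) [IsProbabilityMeasure μ]
    (m : ℕ) (hm : 1 ≤ m) (H0 : Finset (Fin m)) (p : Ω → Fin m → ℝ)
    (hsetting : IndepSetting μ m H0 p)
    (pihat : (Fin m → ℝ) → ℝ) (hpihat_meas : Measurable pihat)
    (hpihat_nonneg : ∀ q, 0 ≤ pihat q)
    (hmono : ∀ q q' : Fin m → ℝ, (∀ i, q i ≤ q' i) → pihat q ≤ pihat q')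
    (α : ℝ) (hα : α ∈ Set.Ioo (0 : ℝ) 1) :
    FDR μ m H0 α pihat (fun _ => 1) p ≤
      ENNReal.ofReal (α / m) *
        ∑ i ∈ H0, ∫⁻ ω, (ENNReal.ofReal (pihat (Function.update (p ω) i 0)))⁻¹ ∂μ := by
  obtain ⟨hp_meas, hp_mem, hp_indep, hp_sup⟩ := hsetting
  obtain ⟨hα0, hα1⟩ := hα
  have hm0 : 0 < m := hm
  have hmR : (0:ℝ) < (m:ℝ) := by exact_mod_cast hm0
  have hαm : 0 < α / (m:ℝ) := div_pos hα0 hmR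
  set khatF : (Fin m → ℝ) → ℕ := fun x => khat m α 1 (pihat x) x with hkhatF
  set Hfun : Fin m → ℝ × (Fin m → ℝ) → ℝ≥0∞ := fun i z =>
    if pihat z.2 = 0 then ⊤ else
      (if z.1 ≤ min 1 ((α / ((m:ℝ) * pihat z.2)) * (khatF (Function.update z.2 i z.1) : ℝ))
        then ((max (khatF (Function.update z.2 i z.1)) 1 : ℕ) : ℝ≥0∞)⁻¹ else 0) with hHfun
  -- measurability facts
  have hupd_meas : ∀ i : Fin m, Measurable fun z : ℝ × (Fin m → ℝ) => Function.update z.2 i z.1 := by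
    intro i
    apply measurable_pi_lambda
    intro j
    rcases eq_or_ne j i with rfl | hne
    · simpa only [Function.update_self] using measurable_fst
    · simp only [Function.update_of_ne hne]
      exact (measurable_pi_apply j).comp measurable_snd
  have hkhatF_meas : Measurable khatF := measurable_khatF α hpihat_meas
  have hH_meas : ∀ i, Measurable (Hfun i) := by
    intro i
    simp only [hHfun]
    refine Measurable.ite ((hpihat_meas.comp measurable_snd) (measurableSet_singleton 0))
      measurable_const ?_
    refine Measurable.ite ?_ ?_ measurable_const
    · refine measurableSet_le measurable_fst ?_
      refine measurable_const.min (Measurable.mul ?_ ?_)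
      · exact measurable_const.div (measurable_const.mul (hpihat_meas.comp measurable_snd))
      · exact (measurable_of_countable fun n : ℕ => ((n:ℝ))).comp (hkhatF_meas.comp (hupd_meas i))
    · exact (measurable_of_countable fun n : ℕ => ((max n 1 : ℕ) : ℝ≥0∞)⁻¹).comp
        (hkhatF_meas.comp (hupd_meas i))
  have hX_meas : ∀ i : Fin m, Measurable fun ω => p ω i :=
    fun i => (measurable_pi_apply i).comp hp_meas
  have hY_meas : ∀ i : Fin m, Measurable fun ω => Function.update (p ω) i 0 := by
    intro i
    apply measurable_pi_lambda
    intro j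
    rcases eq_or_ne j i with rfl | hne
    · simpa only [Function.update_self] using measurable_const
    · simp only [Function.update_of_ne hne]
      exact (measurable_pi_apply j).comp hp_meas
  -- pointwise bound
  have hpoint : ∀ ω, ENNReal.ofReal (FDP m H0 α pihat (fun _ => 1) (p ω))
      ≤ ∑ i ∈ H0, Hfun i (p ω i, Function.update (p ω) i 0) := by
    intro ω
    have hFDP : ENNReal.ofReal (FDP m H0 α pihat (fun _ => 1) (p ω))
        = ∑ i ∈ H0, ENNReal.ofReal
          ((if p ω i ≤ bhThresh m α 1 (pihat (p ω)) (khatF (p ω)) then (1:ℝ) else 0)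
            / ((max (khatF (p ω)) 1 : ℕ) : ℝ)) := by
      simp only [FDP, hkhatF]
      rw [Finset.card_filter, Nat.cast_sum, Finset.sum_div, ENNReal.ofReal_sum_of_nonneg
        (fun i _ => div_nonneg (Nat.cast_nonneg _) (Nat.cast_nonneg _))]
      refine Finset.sum_congr rfl fun i _ => ?_
      congr 1
      split <;> simp
    rw [hFDP]
    refine Finset.sum_le_sum fun i hi => ?_
    by_cases hq0 : pihat (Function.update (p ω) i 0) = 0
    · simp only [hHfun]
      rw [if_pos hq0]
      exact le_top
    · have hqle : pihat (Function.update (p ω) i 0) ≤ pihat (p ω) := by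
        refine hmono _ _ fun j => ?_
        rcases eq_or_ne j i with rfl | hne
        · rw [Function.update_self]; exact (hp_mem ω j).1
        · rw [Function.update_of_ne hne]
      have hqpos : 0 < pihat (Function.update (p ω) i 0) :=
        lt_of_le_of_ne (hpihat_nonneg _) (Ne.symm hq0)
      have hxpos : 0 < pihat (p ω) := lt_of_lt_of_le hqpos hqle
      have hupd : Function.update (Function.update (p ω) i 0) i (p ω i) = p ω := by
        rw [Function.update_idem, Function.update_eq_self]
      simp only [hHfun]
      rw [if_neg hq0, hupd]
      by_cases hev : p ω i ≤ bhThresh m α 1 (pihat (p ω)) (khatF (p ω))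
      · have hcond : p ω i ≤ min 1 ((α / ((m:ℝ) * pihat (Function.update (p ω) i 0)))
            * (khatF (p ω) : ℝ)) := by
          refine le_trans hev ?_
          rw [bhThresh, if_neg (ne_of_gt hxpos)]
          refine min_le_min (le_refl 1) ?_
          rw [div_mul_eq_mul_div]
          refine div_le_div_of_nonneg_left (by positivity)
            (mul_pos hmR hqpos) ?_
          exact mul_le_mul_of_nonneg_left hqle (Nat.cast_nonneg m)
        rw [if_pos hev, if_pos hcond]
        have hDpos : (0:ℝ) < ((max (khatF (p ω)) 1 : ℕ) : ℝ) := by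
          exact_mod_cast lt_of_lt_of_le Nat.zero_lt_one (le_max_right _ _)
        rw [one_div, ENNReal.ofReal_inv_of_pos hDpos, ENNReal.ofReal_natCast]
      · rw [if_neg hev, zero_div, ENNReal.ofReal_zero]
        exact zero_le
  -- per-i integral bound
  have key : ∀ i ∈ H0, ∫⁻ ω, Hfun i (p ω i, Function.update (p ω) i 0) ∂μ
      ≤ ENNReal.ofReal (α / m) *
        ∫⁻ ω, (ENNReal.ofReal (pihat (Function.update (p ω) i 0)))⁻¹ ∂μ := by
    intro i hi
    have hindep : IndepFun (fun ω => p ω i) (fun ω => Function.update (p ω) i 0) μ := by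
      have h1 := hp_indep.indepFun_finset {i} {i}ᶜ disjoint_compl_right
        (fun j => hX_meas j)
      set φ : (({i} : Finset (Fin m)) → ℝ) → ℝ :=
        fun v => v ⟨i, Finset.mem_singleton_self i⟩ with hφdef
      set ψ : (({i}ᶜ : Finset (Fin m)) → ℝ) → (Fin m → ℝ) :=
        fun v j => if hj : j = i then 0
          else v ⟨j, Finset.mem_compl.mpr (by simp [hj])⟩ with hψdef
      have hφ : Measurable φ := measurable_pi_apply _
      have hψ : Measurable ψ := by
        apply measurable_pi_lambda
        intro j
        rcases eq_or_ne j i with rfl | hne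
        · simp only [hψdef, dif_pos rfl]
          exact measurable_const
        · simp only [hψdef, dif_neg hne]
          exact measurable_pi_apply _
      have h2 := h1.comp hφ hψ
      have hXeq : (φ ∘ fun a (j : ({i} : Finset (Fin m))) => p a j) = fun ω => p ω i := rfl
      have hYeq : (ψ ∘ fun a (j : (({i}ᶜ : Finset (Fin m)))) => p a j)
          = fun ω => Function.update (p ω) i 0 := by
        funext a
        funext j
        rcases eq_or_ne j i with rfl | hne
        · simp [hψdef]
        · simp [hψdef, hne, Function.update_of_ne hne]
      rwa [hXeq, hYeq] at h2
    set X : Ω → ℝ := fun ω => p ω i with hXdef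
    set Y : Ω → (Fin m → ℝ) := fun ω => Function.update (p ω) i 0 with hYdef
    have hX : Measurable X := hX_meas i
    have hY : Measurable Y := hY_meas i
    haveI hprobX : IsProbabilityMeasure (μ.map X) := Measure.isProbabilityMeasure_map hX.aemeasurable
    haveI hprobY : IsProbabilityMeasure (μ.map Y) := Measure.isProbabilityMeasure_map hY.aemeasurable
    have hνXsup : ∀ t ∈ Set.Icc (0:ℝ) 1, (μ.map X) (Set.Iic t) ≤ ENNReal.ofReal t := by
      intro t ht
      rw [Measure.map_apply hX measurableSet_Iic]
      exact hp_sup i hi t ht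
    have hmap : μ.map (fun ω => (X ω, Y ω)) = (μ.map X).prod (μ.map Y) :=
      (indepFun_iff_map_prod_eq_prod_map_map hX.aemeasurable hY.aemeasurable).mp hindep
    have hinv_meas : Measurable fun q : Fin m → ℝ => (ENNReal.ofReal (pihat q))⁻¹ :=
      (ENNReal.measurable_ofReal.comp hpihat_meas).inv
    calc ∫⁻ ω, Hfun i (X ω, Y ω) ∂μ
        = ∫⁻ z, Hfun i z ∂(μ.map fun ω => (X ω, Y ω)) :=
          (lintegral_map (hH_meas i) (hX.prodMk hY)).symm
      _ = ∫⁻ z, Hfun i z ∂((μ.map X).prod (μ.map Y)) := by rw [hmap]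
      _ = ∫⁻ q, ∫⁻ u, Hfun i (u, q) ∂(μ.map X) ∂(μ.map Y) :=
          lintegral_prod_symm _ (hH_meas i).aemeasurable
      _ ≤ ∫⁻ q, ENNReal.ofReal (α / m) * (ENNReal.ofReal (pihat q))⁻¹ ∂(μ.map Y) := by
          refine lintegral_mono fun q => ?_
          by_cases hq : pihat q = 0
          · have hrw : (fun u => Hfun i (u, q)) = fun _ => (⊤ : ℝ≥0∞) := by
              funext u; rw [hHfun]; simp only [hq, if_pos]
            rw [hrw, lintegral_const, measure_univ, mul_one, hq]
            rw [ENNReal.ofReal_zero, ENNReal.inv_zero, ENNReal.mul_top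
              (ne_of_gt (ENNReal.ofReal_pos.mpr hαm))]
          · have hqpos : 0 < pihat q := lt_of_le_of_ne (hpihat_nonneg _) (Ne.symm hq)
            have hganti : Antitone fun u => khatF (Function.update q i u) := by
              intro u v huv
              refine khat_anti hm0 (le_of_lt hα0) pihat hpihat_nonneg hmono fun j => ?_
              rcases eq_or_ne j i with rfl | hne
              · rw [Function.update_self, Function.update_self]; exact huv
              · rw [Function.update_of_ne hne, Function.update_of_ne hne]
            have hc : 0 ≤ α / ((m:ℝ) * pihat q) :=
              div_nonneg (le_of_lt hα0) (le_of_lt (mul_pos hmR hqpos))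
            have hrw : (fun u => Hfun i (u, q)) = fun u =>
                (if u ≤ min 1 ((α / ((m:ℝ) * pihat q)) * ((khatF (Function.update q i u) : ℕ) : ℝ))
                  then ((max (khatF (Function.update q i u)) 1 : ℕ) : ℝ≥0∞)⁻¹ else 0) := by
              funext u; simp only [hHfun]; rw [if_neg hq]
            rw [hrw]
            refine le_trans (core_lemma (μ.map X) hνXsup
              (fun u => khatF (Function.update q i u)) hganti hc) ?_
            rw [← div_div, ENNReal.ofReal_div_of_pos hqpos, div_eq_mul_inv]
      _ = ENNReal.ofReal (α / m) * ∫⁻ q, (ENNReal.ofReal (pihat q))⁻¹ ∂(μ.map Y) :=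
          lintegral_const_mul _ hinv_meas
      _ = ENNReal.ofReal (α / m) * ∫⁻ ω, (ENNReal.ofReal (pihat (Y ω)))⁻¹ ∂μ := by
          rw [lintegral_map hinv_meas hY]
  calc FDR μ m H0 α pihat (fun _ => 1) p
      = ∫⁻ ω, ENNReal.ofReal (FDP m H0 α pihat (fun _ => 1) (p ω)) ∂μ := rfl
    _ ≤ ∫⁻ ω, ∑ i ∈ H0, Hfun i (p ω i, Function.update (p ω) i 0) ∂μ := lintegral_mono hpoint
    _ = ∑ i ∈ H0, ∫⁻ ω, Hfun i (p ω i, Function.update (p ω) i 0) ∂μ :=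
        lintegral_finset_sum _ fun i _ => (hH_meas i).comp ((hX_meas i).prodMk (hY_meas i))
    _ ≤ ∑ i ∈ H0, ENNReal.ofReal (α / m) *
          ∫⁻ ω, (ENNReal.ofReal (pihat (Function.update (p ω) i 0)))⁻¹ ∂μ :=
        Finset.sum_le_sum key
    _ = ENNReal.ofReal (α / m) *
          ∑ i ∈ H0, ∫⁻ ω, (ENNReal.ofReal (pihat (Function.update (p ω) i 0)))⁻¹ ∂μ :=
        (Finset.mul_sum _ _ _).symm

end
end

section
/- In the independent setting, for every λ ∈ (0,1) and α ∈ (0,1), the adaptive BH procedure using the λ-Storey estimator and no capping controls the FDR at level α: FDR(ABH_α(π̂_{0,λ})) ≤ α. -/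
open MeasureTheory ProbabilityTheory
open scoped ENNReal

noncomputable section

open Classical in
/-- The `λ`-Storey estimator `π̂_{0,λ} = (1 + #{i : p_i > λ})/(m(1-λ))`. -/
def storey (m : ℕ) (lam : ℝ) (q : Fin m → ℝ) : ℝ :=
  (1 + ((Finset.univ.filter fun i => lam < q i).card : ℝ)) / (m * (1 - lam))

namespace Statement2Aux
open Finset

open Classical in
lemma orderStat_le_iff {m : ℕ} (q : Fin m → ℝ) {k : ℕ} (hk1 : 1 ≤ k) (hkm : k ≤ m) (t : ℝ) :
    orderStat q k ≤ t ↔ k ≤ (Finset.univ.filter fun i => q i ≤ t).card := by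
  classical
  have hm : 0 < m := lt_of_lt_of_le hk1 hkm
  have hne : Nonempty (Fin m) := ⟨⟨0, hm⟩⟩
  have hune : (Finset.univ : Finset (Fin m)).Nonempty := Finset.univ_nonempty
  set S : Set ℝ := {s : ℝ | k ≤ (Finset.univ.filter fun i => q i ≤ s).card} with hS
  have hmono : ∀ {a b : ℝ}, a ≤ b → a ∈ S → b ∈ S := by
    intro a b hab ha
    refine le_trans ha (Finset.card_le_card ?_)
    intro x hx
    simp only [Finset.mem_filter] at hx ⊢
    exact ⟨hx.1, hx.2.trans hab⟩
  have hSne : S.Nonempty := by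
    refine ⟨Finset.univ.sup' hune q, ?_⟩
    have heq : (Finset.univ.filter fun i => q i ≤ Finset.univ.sup' hune q) = Finset.univ :=
      Finset.filter_true_of_mem fun i _ => Finset.le_sup' q (Finset.mem_univ i)
    simp only [hS, Set.mem_setOf_eq, heq, Finset.card_univ, Fintype.card_fin]
    exact hkm
  have hbdd : BddBelow S := by
    refine ⟨Finset.univ.inf' hune q, ?_⟩
    intro s hs
    have hpos : 0 < (Finset.univ.filter fun i => q i ≤ s).card := lt_of_lt_of_le hk1 hs
    obtain ⟨j, hj⟩ := Finset.card_pos.mp hpos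
    exact le_trans (Finset.inf'_le q (Finset.mem_univ j)) (Finset.mem_filter.mp hj).2
  have hmem : sInf S ∈ S := by
    by_contra hnot
    set a := sInf S with ha
    set G := Finset.univ.filter fun j => a < q j with hG
    rcases G.eq_empty_or_nonempty with hGe | hGne
    · have heq : (Finset.univ.filter fun i => q i ≤ a) = Finset.univ := by
        refine Finset.filter_true_of_mem fun i _ => ?_
        by_contra hlt
        exact (Finset.eq_empty_iff_forall_notMem.mp hGe i) (by simp [hG, lt_of_not_ge hlt])
      refine hnot ?_
      simp only [hS, Set.mem_setOf_eq, heq, Finset.card_univ, Fintype.card_fin]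
      exact hkm
    · set ε := G.inf' hGne q with hε
      have haε : a < ε := by
        rw [hε]
        exact (Finset.lt_inf'_iff hGne).mpr fun j hj => (Finset.mem_filter.mp hj).2
      have hlow : ∀ s ∈ S, ε ≤ s := by
        intro s hs
        by_contra hlt
        push_neg at hlt
        have hsub : (Finset.univ.filter fun i => q i ≤ s) ⊆
            Finset.univ.filter fun i => q i ≤ a := by
          intro x hx
          simp only [Finset.mem_filter] at hx ⊢
          refine ⟨hx.1, ?_⟩
          by_contra hxa
          have hxG : x ∈ G := by simp [hG, lt_of_not_ge hxa]
          exact absurd (le_trans (Finset.inf'_le q hxG) hx.2) (not_le.mpr hlt)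
        exact hnot (le_trans hs (Finset.card_le_card hsub))
      exact absurd (le_csInf hSne hlow) (not_le.mpr haε)
  have hko : orderStat q k = sInf S := by
    have : k ≠ 0 := Nat.one_le_iff_ne_zero.mp hk1
    simp only [orderStat, this, if_false, hS]

  constructor
  · intro h
    have : t ∈ S := hmono (by rw [← hko]; exact h) hmem
    exact this
  · intro h
    rw [hko]
    exact csInf_le hbdd h

end Statement2Aux

namespace Statement2Aux
open Finset

open Classical in
/-- number of p-values exceeding `lam` -/
def cnt (lam : ℝ) {m : ℕ} (q : Fin m → ℝ) : ℕ := (Finset.univ.filter fun i => lam < q i).card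

variable {m : ℕ} {α lam : ℝ}

lemma storey_pos (hm : 1 ≤ m) (hlam : lam ∈ Set.Ioo (0:ℝ) 1) (q : Fin m → ℝ) :
    0 < storey m lam q := by
  have h1 : (0:ℝ) < 1 + ((Finset.univ.filter fun i => lam < q i).card : ℝ) := by positivity
  have h2 : (0:ℝ) < (m : ℝ) * (1 - lam) := by
    have : (0:ℝ) < (m:ℝ) := by exact_mod_cast hm
    nlinarith [hlam.2]
  exact div_pos h1 h2

lemma bh_eq (hm : 1 ≤ m) (hlam : lam ∈ Set.Ioo (0:ℝ) 1) (q : Fin m → ℝ) (k : ℕ) :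
    bhThresh m α 1 (storey m lam q) k
      = min 1 (α * (1-lam) * k / (1 + (cnt lam q : ℝ))) := by
  have hs := storey_pos hm hlam q
  rw [bhThresh, if_neg (ne_of_gt hs)]
  congr 1
  rw [storey, cnt]
  have hm0 : (0:ℝ) < (m:ℝ) := by exact_mod_cast hm
  have hl1 : (0:ℝ) < 1 - lam := by linarith [hlam.2]
  have hc : (0:ℝ) < 1 + ((Finset.univ.filter fun i => lam < q i).card : ℝ) := by positivity
  field_simp

lemma cnt_mono (q q' : Fin m → ℝ) (h : ∀ j, q j ≤ q' j) : cnt lam q ≤ cnt lam q' := by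
  classical
  refine Finset.card_le_card ?_
  intro x hx
  simp only [cnt, Finset.mem_filter] at hx ⊢
  exact ⟨hx.1, lt_of_lt_of_le hx.2 (h x)⟩

lemma cnt_update_zero_le (hlam : lam ∈ Set.Ioo (0:ℝ) 1) (w : Fin m → ℝ) (i : Fin m) (x : ℝ) :
    cnt lam (Function.update w i 0) ≤ cnt lam (Function.update w i x) := by
  classical
  refine Finset.card_le_card ?_
  intro j hj
  simp only [cnt, Finset.mem_filter] at hj ⊢
  refine ⟨hj.1, ?_⟩
  rcases eq_or_ne j i with rfl | hne
  · exfalso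
    have := hj.2
    rw [Function.update_self] at this
    linarith [hlam.1]
  · have := hj.2
    rwa [Function.update_of_ne hne] at this ⊢

lemma orderStat_mono (q q' : Fin m → ℝ) (h : ∀ j, q j ≤ q' j) {k : ℕ} (hkm : k ≤ m) :
    orderStat q k ≤ orderStat q' k := by
  classical
  rcases Nat.eq_zero_or_pos k with rfl | hk1
  · simp [orderStat]
  · rw [orderStat_le_iff q hk1 hkm]
    have h' : k ≤ (Finset.univ.filter fun i => q' i ≤ orderStat q' k).card :=
      (orderStat_le_iff q' hk1 hkm _).mp le_rfl
    refine le_trans h' (Finset.card_le_card ?_)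
    intro x hx
    simp only [Finset.mem_filter] at hx ⊢
    exact ⟨hx.1, le_trans (h x) hx.2⟩

end Statement2Aux

namespace Statement2Aux
open Finset

variable {m : ℕ} {α lam : ℝ}

open Classical in
lemma khat_def (κ s : ℝ) (q : Fin m → ℝ) :
    khat m α κ s q = Nat.findGreatest (fun k => orderStat q k ≤ bhThresh m α κ s k) m := rfl

lemma khat_le (κ s : ℝ) (q : Fin m → ℝ) : khat m α κ s q ≤ m := by
  rw [khat_def]; exact Nat.findGreatest_le m

lemma khat_ge {κ s : ℝ} {q : Fin m → ℝ} {k : ℕ} (hk : k ≤ m)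
    (hp : orderStat q k ≤ bhThresh m α κ s k) : k ≤ khat m α κ s q := by
  rw [khat_def]; exact Nat.le_findGreatest hk hp

lemma khat_spec {κ s : ℝ} {q : Fin m → ℝ} (h : khat m α κ s q ≠ 0) :
    orderStat q (khat m α κ s q) ≤ bhThresh m α κ s (khat m α κ s q) := by
  classical
  have := (Nat.findGreatest_eq_iff.mp (khat_def (m := m) (α := α) κ s q).symm).2.1
  exact this h

lemma update_le_update {w : Fin m → ℝ} {i : Fin m} {x x' : ℝ} (h : x ≤ x') :
    ∀ j, Function.update w i x j ≤ Function.update w i x' j := by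
  intro j
  rcases eq_or_ne j i with rfl | hne
  · simpa using h
  · simp [Function.update_of_ne hne]

lemma khat_update_anti (hm : 1 ≤ m) (hα : α ∈ Set.Ioo (0:ℝ) 1) (hlam : lam ∈ Set.Ioo (0:ℝ) 1)
    (w : Fin m → ℝ) (i : Fin m) {x x' : ℝ} (hxx : x ≤ x') :
    khat m α 1 (storey m lam (Function.update w i x')) (Function.update w i x')
      ≤ khat m α 1 (storey m lam (Function.update w i x)) (Function.update w i x) := by
  set q := Function.update w i x with hq
  set q' := Function.update w i x' with hq'
  set k' := khat m α 1 (storey m lam q') q' with hk'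
  rcases Nat.eq_zero_or_pos k' with h0 | hpos
  · simp [h0]
  have hk'm : k' ≤ m := khat_le _ _ _
  have hspec := khat_spec (Nat.pos_iff_ne_zero.mp hpos)
  rw [← hk'] at hspec
  refine khat_ge hk'm ?_
  have h1 : orderStat q k' ≤ orderStat q' k' := orderStat_mono q q' (update_le_update hxx) hk'm
  have hcnt : cnt lam q ≤ cnt lam q' := cnt_mono q q' (update_le_update hxx)
  have h2 : bhThresh m α 1 (storey m lam q') k' ≤ bhThresh m α 1 (storey m lam q) k' := by
    rw [bh_eq hm hlam, bh_eq hm hlam]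
    refine min_le_min le_rfl ?_
    have hnum : (0:ℝ) ≤ α * (1-lam) * k' := by
      have h1 : (0:ℝ) ≤ 1 - lam := by linarith [hlam.2]
      exact mul_nonneg (mul_nonneg hα.1.le h1) (Nat.cast_nonneg _)
    have hden : (0:ℝ) < 1 + (cnt lam q : ℝ) := by positivity
    refine div_le_div_of_nonneg_left hnum hden ?_
    have : ((cnt lam q : ℝ)) ≤ (cnt lam q' : ℝ) := by exact_mod_cast hcnt
    linarith
  exact le_trans h1 (le_trans hspec h2)

lemma khat_update_zero_pos (hm : 1 ≤ m) (hα : α ∈ Set.Ioo (0:ℝ) 1)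
    (hlam : lam ∈ Set.Ioo (0:ℝ) 1) (w : Fin m → ℝ) (i : Fin m) :
    1 ≤ khat m α 1 (storey m lam (Function.update w i 0)) (Function.update w i 0) := by
  classical
  set q := Function.update w i 0 with hq
  refine khat_ge hm ?_
  have hbh : (0:ℝ) < bhThresh m α 1 (storey m lam q) 1 := by
    rw [bh_eq hm hlam]
    have h1 : (0:ℝ) < α * (1-lam) * (1:ℕ) / (1 + (cnt lam q : ℝ)) := by
      have := hα.1; have := hlam.2
      have hden : (0:ℝ) < 1 + (cnt lam q : ℝ) := by positivity
      apply div_pos _ hden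
      push_cast
      nlinarith
    exact lt_min one_pos h1
  rw [orderStat_le_iff q le_rfl hm]
  refine Finset.card_pos.mpr ⟨i, ?_⟩
  simp only [Finset.mem_filter, Finset.mem_univ, true_and, hq, Function.update_self]
  exact le_of_lt hbh

end Statement2Aux

namespace Statement2Aux
open Finset

variable {m : ℕ} {α lam : ℝ}

open scoped ENNReal

lemma bh_nonneg (hm : 1 ≤ m) (hα : α ∈ Set.Ioo (0:ℝ) 1) (hlam : lam ∈ Set.Ioo (0:ℝ) 1)
    (q : Fin m → ℝ) (k : ℕ) : 0 ≤ bhThresh m α 1 (storey m lam q) k := by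
  rw [bh_eq hm hlam]
  have h1 : (0:ℝ) ≤ 1 - lam := by linarith [hlam.2]
  have hden : (0:ℝ) < 1 + (cnt lam q : ℝ) := by positivity
  have : (0:ℝ) ≤ α * (1-lam) * k / (1 + (cnt lam q : ℝ)) :=
    div_nonneg (mul_nonneg (mul_nonneg hα.1.le h1) (Nat.cast_nonneg _)) hden.le
  exact le_min zero_le_one this

lemma bh_le_one (hm : 1 ≤ m) (hlam : lam ∈ Set.Ioo (0:ℝ) 1) (q : Fin m → ℝ) (k : ℕ) :
    bhThresh m α 1 (storey m lam q) k ≤ 1 := by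
  rw [bh_eq hm hlam]; exact min_le_left _ _

/-- Key deterministic leave-one-out lemma. -/
lemma loo (hm : 1 ≤ m) (hα : α ∈ Set.Ioo (0:ℝ) 1) (hlam : lam ∈ Set.Ioo (0:ℝ) 1)
    (w : Fin m → ℝ) (i : Fin m) :
    ∃ u : ℝ, ∃ K : ℕ, 0 ≤ u ∧ u ≤ 1 ∧ 1 ≤ K ∧
      (∀ x : ℝ,
        ENNReal.ofReal
          ((if Function.update w i x i ≤
              bhThresh m α 1 (storey m lam (Function.update w i x))
                (khat m α 1 (storey m lam (Function.update w i x)) (Function.update w i x))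
            then (1:ℝ) else 0)
            / (max (khat m α 1 (storey m lam (Function.update w i x)) (Function.update w i x)) 1 : ℕ))
          ≤ Set.indicator {x' : ℝ | x' ≤ u} (fun _ => ((K : ℝ≥0∞))⁻¹) x) ∧
      ENNReal.ofReal u * ((K : ℝ≥0∞))⁻¹
        ≤ ENNReal.ofReal (α * (1-lam) / (1 + (cnt lam (Function.update w i 0) : ℝ))) := by
  classical
  set Q : ℝ → (Fin m → ℝ) := fun x => Function.update w i x with hQ
  set KH : ℝ → ℕ := fun x => khat m α 1 (storey m lam (Q x)) (Q x) with hKH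
  set BH : ℝ → ℝ := fun x => bhThresh m α 1 (storey m lam (Q x)) (KH x) with hBH
  set S : Set ℝ := {x | x ≤ BH x} with hS
  have hS0 : (0:ℝ) ∈ S := bh_nonneg hm hα hlam (Q 0) (KH 0)
  have hSne : S.Nonempty := ⟨0, hS0⟩
  have hSub : ∀ x ∈ S, x ≤ 1 := fun x hx => le_trans hx (bh_le_one hm hlam _ _)
  have hSbdd : BddAbove S := ⟨1, fun x hx => hSub x hx⟩
  set u := sSup S with hu
  have hu0 : 0 ≤ u := le_csSup hSbdd hS0
  have hu1 : u ≤ 1 := csSup_le hSne hSub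
  -- every x in S has KH x ≥ 1
  have hKH1 : ∀ x ∈ S, 1 ≤ KH x := by
    intro x hx
    by_contra hlt
    have h0 : KH x = 0 := by omega
    have hx0 : x ≤ 0 := by
      have := hx
      rw [hS, Set.mem_setOf_eq, hBH] at this
      simp only at this
      rw [h0, bh_eq hm hlam] at this
      have h2 := this.trans (min_le_right _ _)
      simpa using h2
    have : 1 ≤ KH x := le_trans (khat_update_zero_pos hm hα hlam w i)
      (khat_update_anti hm hα hlam w i hx0)
    omega
  -- minimal value of KH over S
  set NS : Set ℕ := {n | ∃ x ∈ S, KH x = n} with hNS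
  have hNSne : NS.Nonempty := ⟨KH 0, 0, hS0, rfl⟩
  set K := sInf NS with hK
  obtain ⟨x₀, hx₀S, hx₀K⟩ : ∃ x ∈ S, KH x = K := Nat.sInf_mem hNSne
  have hK1 : 1 ≤ K := hx₀K ▸ hKH1 x₀ hx₀S
  have hKle : ∀ x ∈ S, K ≤ KH x := fun x hx => Nat.sInf_le ⟨x, hx, rfl⟩
  -- bound on elements of S
  set c0 : ℝ := α * (1-lam) / (1 + (cnt lam (Function.update w i 0) : ℝ)) with hc0
  have hc0nn : 0 ≤ c0 := by
    have h1 : (0:ℝ) ≤ 1 - lam := by linarith [hlam.2]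
    have hden : (0:ℝ) < 1 + (cnt lam (Function.update w i 0) : ℝ) := by positivity
    exact div_nonneg (mul_nonneg hα.1.le h1) hden.le
  have hxle : ∀ x ∈ S, x ≤ c0 * KH x := by
    intro x hx
    have hx' : x ≤ BH x := hx
    rw [hBH] at hx'
    simp only at hx'
    rw [bh_eq hm hlam] at hx'
    have h2 : x ≤ α * (1-lam) * (KH x) / (1 + (cnt lam (Q x) : ℝ)) :=
      le_trans hx' (min_le_right _ _)
    have hcnt : (cnt lam (Function.update w i 0) : ℝ) ≤ (cnt lam (Q x) : ℝ) := by
      exact_mod_cast cnt_update_zero_le hlam w i x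
    have hnum : (0:ℝ) ≤ α * (1-lam) * (KH x) := by
      have h1 : (0:ℝ) ≤ 1 - lam := by linarith [hlam.2]
      exact mul_nonneg (mul_nonneg hα.1.le h1) (Nat.cast_nonneg _)
    have hden : (0:ℝ) < 1 + (cnt lam (Function.update w i 0) : ℝ) := by positivity
    have h3 : α * (1-lam) * (KH x) / (1 + (cnt lam (Q x) : ℝ))
        ≤ α * (1-lam) * (KH x) / (1 + (cnt lam (Function.update w i 0) : ℝ)) :=
      div_le_div_of_nonneg_left hnum hden (by linarith)
    calc x ≤ _ := h2
      _ ≤ _ := h3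
      _ = c0 * KH x := by rw [hc0]; ring
  have huK : u ≤ c0 * K := by
    refine csSup_le hSne ?_
    intro x hx
    rcases le_or_gt x₀ x with hc | hc
    · have : KH x ≤ KH x₀ := khat_update_anti hm hα hlam w i hc
      have hKx : KH x = K := le_antisymm (hx₀K ▸ this) (hKle x hx)
      rw [← hKx]
      exact hxle x hx
    · have : x ≤ c0 * KH x₀ := le_of_lt (lt_of_lt_of_le hc (hxle x₀ hx₀S))
      rwa [hx₀K] at this
  refine ⟨u, K, hu0, hu1, hK1, ?_, ?_⟩
  · intro x
    by_cases hxS : x ≤ BH x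
    · have hxS' : x ∈ S := hxS
      have hcond : Function.update w i x i ≤
          bhThresh m α 1 (storey m lam (Function.update w i x))
            (khat m α 1 (storey m lam (Function.update w i x)) (Function.update w i x)) := by
        rw [Function.update_self]
        exact hxS
      rw [if_pos hcond]
      have hKHx : 1 ≤ KH x := hKH1 x hxS'
      have hmax : (max (KH x) 1) = KH x := max_eq_left hKHx
      have hxu : x ∈ {x' : ℝ | x' ≤ u} := le_csSup hSbdd hxS'
      rw [Set.indicator_of_mem hxu]
      have heq : ENNReal.ofReal ((1:ℝ) / (max (KH x) 1 : ℕ)) = ((KH x : ℝ≥0∞))⁻¹ := by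
        have hpos : (0:ℝ) < (KH x : ℝ) := by exact_mod_cast lt_of_lt_of_le one_pos hKHx
        rw [hmax, one_div, ENNReal.ofReal_inv_of_pos hpos, ENNReal.ofReal_natCast]
      rw [heq]
      exact ENNReal.inv_le_inv' (by exact_mod_cast hKle x hxS')
    · have hcond : ¬ (Function.update w i x i ≤
          bhThresh m α 1 (storey m lam (Function.update w i x))
            (khat m α 1 (storey m lam (Function.update w i x)) (Function.update w i x))) := by
        rw [Function.update_self]
        exact hxS
      rw [if_neg hcond]
      simp
  · have h1 : ENNReal.ofReal u ≤ ENNReal.ofReal (c0 * K) := ENNReal.ofReal_le_ofReal huK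
    calc ENNReal.ofReal u * ((K : ℝ≥0∞))⁻¹ ≤ ENNReal.ofReal (c0 * K) * ((K : ℝ≥0∞))⁻¹ :=
          mul_le_mul_left h1 _
      _ = ENNReal.ofReal c0 * ((K : ℝ≥0∞) * ((K : ℝ≥0∞))⁻¹) := by
          rw [ENNReal.ofReal_mul hc0nn, ENNReal.ofReal_natCast, mul_assoc]
      _ = ENNReal.ofReal c0 := by
          rw [ENNReal.mul_inv_cancel (by exact_mod_cast Nat.pos_iff_ne_zero.mp hK1)
            (ENNReal.natCast_ne_top K), mul_one]

end Statement2Aux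

namespace Statement2Aux
open Finset MeasureTheory
open scoped ENNReal

variable {m : ℕ} {α lam : ℝ}

open Classical in
lemma cnt_eq_sum (q : Fin m → ℝ) :
    cnt lam q = ∑ j : Fin m, if lam < q j then 1 else 0 := by
  rw [cnt, Finset.card_filter]

lemma measurable_cnt : Measurable (fun q : Fin m → ℝ => cnt lam q) := by
  classical
  have : (fun q : Fin m → ℝ => cnt lam q)
      = fun q => ∑ j : Fin m, if lam < q j then (1:ℕ) else 0 := by
    funext q; exact cnt_eq_sum q
  rw [this]
  refine Finset.measurable_sum _ (fun j _ => ?_)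
  exact Measurable.ite (measurableSet_lt measurable_const (measurable_pi_apply j))
    measurable_const measurable_const

lemma measurable_Ncard (t : ℝ) :
    Measurable (fun q : Fin m → ℝ => (Finset.univ.filter fun i => q i ≤ t).card) := by
  classical
  have : (fun q : Fin m → ℝ => (Finset.univ.filter fun i => q i ≤ t).card)
      = fun q => ∑ j : Fin m, if q j ≤ t then (1:ℕ) else 0 := by
    funext q; rw [Finset.card_filter]
  rw [this]
  refine Finset.measurable_sum _ (fun j _ => ?_)
  exact Measurable.ite (measurableSet_le (measurable_pi_apply j) measurable_const)
    measurable_const measurable_const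

lemma measurable_findGreatest' {γ : Type*} [MeasurableSpace γ] {P : ℕ → γ → Prop}
    [∀ k x, Decidable (P k x)]
    (n : ℕ) (h : ∀ k, k ≤ n → MeasurableSet {x | P k x}) :
    Measurable (fun x => Nat.findGreatest (fun k => P k x) n) := by
  induction n with
  | zero => simpa [Nat.findGreatest] using measurable_const
  | succ n ih =>
    have heq : (fun x => Nat.findGreatest (fun k => P k x) (n+1))
        = fun x => if P (n+1) x then n+1 else Nat.findGreatest (fun k => P k x) n := by
      funext x
      exact Nat.findGreatest_succ n
    rw [heq]
    exact Measurable.ite (h (n+1) le_rfl) measurable_const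
      (ih (fun k hk => h k (hk.trans (Nat.le_succ n))))

lemma measurableSet_pred (hm : 1 ≤ m) (hα : α ∈ Set.Ioo (0:ℝ) 1)
    (hlam : lam ∈ Set.Ioo (0:ℝ) 1) (k : ℕ) (hk : k ≤ m) :
    MeasurableSet {q : Fin m → ℝ |
      orderStat q k ≤ bhThresh m α 1 (storey m lam q) k} := by
  classical
  rcases Nat.eq_zero_or_pos k with rfl | hk1
  · have : {q : Fin m → ℝ | orderStat q 0 ≤ bhThresh m α 1 (storey m lam q) 0}
        = Set.univ := by
      refine Set.eq_univ_iff_forall.mpr (fun q => ?_)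
      have h0 : orderStat q 0 = 0 := by simp [orderStat]
      simp only [Set.mem_setOf_eq, h0]
      exact bh_nonneg hm hα hlam q 0
    rw [this]; exact MeasurableSet.univ
  · have heq : {q : Fin m → ℝ | orderStat q k ≤ bhThresh m α 1 (storey m lam q) k}
        = ⋃ c ∈ Finset.range (m+1), ({q : Fin m → ℝ | cnt lam q = c} ∩
            {q : Fin m → ℝ |
              k ≤ (Finset.univ.filter fun i =>
                q i ≤ min 1 (α * (1-lam) * k / (1 + (c:ℝ)))).card}) := by
      ext q
      simp only [Set.mem_setOf_eq, Set.mem_iUnion, Set.mem_inter_iff, Finset.mem_range]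
      constructor
      · intro hq
        refine ⟨cnt lam q, ?_, rfl, ?_⟩
        · have : cnt lam q ≤ m := by
            rw [cnt]
            exact le_trans (Finset.card_filter_le _ _) (by simp)
          omega
        · rw [orderStat_le_iff q hk1 hk, bh_eq hm hlam] at hq
          exact hq
      · rintro ⟨c, _, hc, hcard⟩
        rw [orderStat_le_iff q hk1 hk, bh_eq hm hlam, hc]
        exact hcard
    rw [heq]
    refine MeasurableSet.biUnion (Finset.range (m+1)).countable_toSet (fun c _ => ?_)
    refine MeasurableSet.inter ?_ ?_
    · exact measurable_cnt (MeasurableSpace.measurableSet_top (s := {c}))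
    · exact measurable_Ncard _ (MeasurableSpace.measurableSet_top)

lemma measurable_khat (hm : 1 ≤ m) (hα : α ∈ Set.Ioo (0:ℝ) 1)
    (hlam : lam ∈ Set.Ioo (0:ℝ) 1) :
    Measurable (fun q : Fin m → ℝ => khat m α 1 (storey m lam q) q) :=
  measurable_findGreatest' m (fun k hk => measurableSet_pred hm hα hlam k hk)

lemma measurable_bh (hm : 1 ≤ m) (hα : α ∈ Set.Ioo (0:ℝ) 1)
    (hlam : lam ∈ Set.Ioo (0:ℝ) 1) :
    Measurable (fun q : Fin m → ℝ =>
      bhThresh m α 1 (storey m lam q) (khat m α 1 (storey m lam q) q)) := by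
  have heq : (fun q : Fin m → ℝ =>
      bhThresh m α 1 (storey m lam q) (khat m α 1 (storey m lam q) q))
      = (fun ck : ℕ × ℕ => min 1 (α * (1-lam) * ck.2 / (1 + (ck.1 : ℝ)))) ∘
        (fun q => (cnt lam q, khat m α 1 (storey m lam q) q)) := by
    funext q
    exact bh_eq hm hlam q _
  rw [heq]
  exact (measurable_of_countable _).comp (measurable_cnt.prodMk (measurable_khat hm hα hlam))

/-- The per-hypothesis FDP summand, as a function of the p-value vector. -/
def body (m' : ℕ) (α' lam' : ℝ) (i : Fin m') (q : Fin m' → ℝ) : ℝ≥0∞ :=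
  ENNReal.ofReal
    ((if q i ≤ bhThresh m' α' 1 (storey m' lam' q) (khat m' α' 1 (storey m' lam' q) q)
      then (1:ℝ) else 0)
      / (max (khat m' α' 1 (storey m' lam' q) q) 1 : ℕ))

lemma measurable_body (hm : 1 ≤ m) (hα : α ∈ Set.Ioo (0:ℝ) 1)
    (hlam : lam ∈ Set.Ioo (0:ℝ) 1) (i : Fin m) :
    Measurable (body m α lam i) := by
  classical
  refine ENNReal.measurable_ofReal.comp (Measurable.div ?_ ?_)
  · exact Measurable.ite
      (measurableSet_le (measurable_pi_apply i) (measurable_bh hm hα hlam))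
      measurable_const measurable_const
  · exact (measurable_of_countable (fun n : ℕ => ((max n 1 : ℕ) : ℝ))).comp
      (measurable_khat hm hα hlam)

end Statement2Aux

namespace Statement2Aux
open Finset MeasureTheory ProbabilityTheory
open scoped ENNReal

lemma lintegral_comp_nat {Ω : Type*} [MeasurableSpace Ω] (μ : Measure Ω)
    {f : Ω → ℝ≥0∞} (D : Ω → ℕ) (hD : Measurable D) {n : ℕ} (hle : ∀ ω, D ω ≤ n)
    (g : ℕ → ℝ≥0∞) (hf : ∀ ω, f ω = g (D ω))
    {B : Set Ω} (hB : MeasurableSet B) :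
    ∫⁻ ω in B, f ω ∂μ = ∑ k ∈ Finset.range (n+1), μ ({ω | D ω = k} ∩ B) * g k := by
  have hpt : f = fun ω => ∑ k ∈ Finset.range (n+1),
      Set.indicator {ω' | D ω' = k} (fun _ => g k) ω := by
    funext ω
    rw [hf ω, Finset.sum_eq_single (D ω)]
    · rw [Set.indicator_of_mem (show ω ∈ {ω' | D ω' = D ω} from rfl)]
    · intro k _ hne
      exact Set.indicator_of_notMem
        (show ω ∉ {ω' | D ω' = k} from fun h => hne (Eq.symm h)) _
    · intro habs
      exact absurd (Finset.mem_range.mpr (Nat.lt_succ_of_le (hle ω))) habs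
  have hms : ∀ k : ℕ, MeasurableSet {ω' | D ω' = k} :=
    fun k => hD (measurableSet_singleton k)
  rw [hpt]
  rw [lintegral_finset_sum _ (fun k _ => measurable_const.indicator (hms k))]
  refine Finset.sum_congr rfl (fun k _ => ?_)
  rw [lintegral_indicator_const (hms k), Measure.restrict_apply (hms k), mul_comm]

lemma gf_bound {Ω : Type*} [MeasurableSpace Ω] (μ : Measure Ω) [IsProbabilityMeasure μ]
    {m : ℕ} {p : Ω → Fin m → ℝ} (hp : Measurable p)
    (hindep : iIndepFun (fun i ω => p ω i) μ)
    {lam : ℝ} (hlam : lam ∈ Set.Ioo (0:ℝ) 1)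
    {x : ℝ} (hx0 : 0 ≤ x) (hx1 : x ≤ 1)
    (T : Finset (Fin m)) (hT : ∀ j ∈ T, μ {ω | p ω j ≤ lam} ≤ ENNReal.ofReal lam) :
    ∫⁻ ω, ENNReal.ofReal (x ^ ((T.filter fun j => lam < p ω j).card)) ∂μ
      ≤ ENNReal.ofReal ((lam + (1-lam)*x) ^ T.card) := by
  classical
  induction T using Finset.induction_on with
  | empty => simp
  | @insert j T' hj ih =>
    have hT' : ∀ l ∈ T', μ {ω | p ω l ≤ lam} ≤ ENNReal.ofReal lam :=
      fun l hl => hT l (Finset.mem_insert_of_mem hl)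
    have hTj : μ {ω | p ω j ≤ lam} ≤ ENNReal.ofReal lam := hT j (Finset.mem_insert_self _ _)
    set D' : Ω → ℕ := fun ω => (T'.filter fun l => lam < p ω l).card with hD'
    set A : Set Ω := {ω | lam < p ω j} with hA
    have hAmeas : MeasurableSet A :=
      measurableSet_lt measurable_const ((measurable_pi_apply j).comp hp)
    have hD'meas : Measurable D' := by
      have heq : D' = fun ω => ∑ l ∈ T', if lam < p ω l then (1:ℕ) else 0 := by
        funext ω
        simp only [hD', Finset.card_filter]
      rw [heq]
      refine Finset.measurable_sum _ (fun l _ => ?_)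
      exact Measurable.ite
        (measurableSet_lt measurable_const ((measurable_pi_apply l).comp hp))
        measurable_const measurable_const
    have hD'le : ∀ ω, D' ω ≤ T'.card := fun ω => Finset.card_filter_le _ _
    set X : Fin m → Ω → ℕ := fun l ω => if lam < p ω l then 1 else 0 with hX
    have hXmeas : ∀ l, Measurable (X l) := by
      intro l
      exact Measurable.ite
        (measurableSet_lt measurable_const ((measurable_pi_apply l).comp hp))
        measurable_const measurable_const
    have hXindep : iIndepFun X μ :=
      hindep.comp (fun l t => if lam < t then 1 else 0)
        (fun l => Measurable.ite measurableSet_Ioi measurable_const measurable_const)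
    have hIF : IndepFun (∑ l ∈ T', X l) (X j) μ :=
      iIndepFun.indepFun_finset_sum_of_notMem hXindep hXmeas hj
    have hD'sum : ∀ ω, D' ω = (∑ l ∈ T', X l) ω := by
      intro ω
      simp only [hD', Finset.card_filter, Finset.sum_apply, hX]
    have hDpre : ∀ k : ℕ, {ω | D' ω = k} = (∑ l ∈ T', X l) ⁻¹' {k} := by
      intro k
      ext ω
      simp only [Set.mem_setOf_eq, Set.mem_preimage, Set.mem_singleton_iff, hD'sum ω]
    have hAeq : A = (X j) ⁻¹' {1} := by
      ext ω
      simp only [hA, Set.mem_setOf_eq, Set.mem_preimage, Set.mem_singleton_iff, hX]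
      by_cases h : lam < p ω j <;> simp [h]
    have hAceq : Aᶜ = (X j) ⁻¹' {0} := by
      ext ω
      simp only [hA, Set.mem_compl_iff, Set.mem_setOf_eq, Set.mem_preimage,
        Set.mem_singleton_iff, hX]
      by_cases h : lam < p ω j <;> simp [h]
    have hprodA : ∀ k : ℕ, μ ({ω | D' ω = k} ∩ A) = μ {ω | D' ω = k} * μ A := by
      intro k
      rw [hDpre k, hAeq]
      exact hIF.measure_inter_preimage_eq_mul {k} {1}
        (measurableSet_singleton _) (measurableSet_singleton _)
    have hprodAc : ∀ k : ℕ, μ ({ω | D' ω = k} ∩ Aᶜ) = μ {ω | D' ω = k} * μ Aᶜ := by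
      intro k
      rw [hDpre k, hAceq]
      exact hIF.measure_inter_preimage_eq_mul {k} {0}
        (measurableSet_singleton _) (measurableSet_singleton _)
    set G' : ℝ≥0∞ := ∫⁻ ω, ENNReal.ofReal (x ^ D' ω) ∂μ with hG'
    have hG'eq : G' = ∑ k ∈ Finset.range (T'.card + 1),
        μ {ω | D' ω = k} * ENNReal.ofReal (x ^ k) := by
      have e := lintegral_comp_nat μ (f := fun ω => ENNReal.ofReal (x ^ D' ω))
        D' hD'meas hD'le (fun k => ENNReal.ofReal (x ^ k)) (fun ω => rfl)
        MeasurableSet.univ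
      rw [hG', ← setLIntegral_univ, e]
      simp [Set.inter_univ]
    have hsplit : ∀ (B : Set Ω), MeasurableSet B →
        (∀ k, μ ({ω | D' ω = k} ∩ B) = μ {ω | D' ω = k} * μ B) →
        ∫⁻ ω in B, ENNReal.ofReal (x ^ D' ω) ∂μ = μ B * G' := by
      intro B hB hprod
      have e := lintegral_comp_nat μ (f := fun ω => ENNReal.ofReal (x ^ D' ω))
        D' hD'meas hD'le (fun k => ENNReal.ofReal (x ^ k)) (fun ω => rfl) hB
      rw [e, hG'eq, Finset.mul_sum]
      refine Finset.sum_congr rfl (fun k _ => ?_)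
      rw [hprod k]
      ring
    have hcard : ∀ ω, ((insert j T').filter fun l => lam < p ω l).card
        = (if lam < p ω j then 1 else 0) + D' ω := by
      intro ω
      rw [Finset.filter_insert]
      by_cases h : lam < p ω j
      · rw [if_pos h, if_pos h,
          Finset.card_insert_of_notMem (fun hmem => hj (Finset.mem_of_mem_filter _ hmem))]
        simp only [hD']
        omega
      · rw [if_neg h, if_neg h]
        simp only [hD']
        omega
    have hmeasDfun : Measurable fun ω => ENNReal.ofReal (x ^ D' ω) :=
      ENNReal.measurable_ofReal.comp ((measurable_of_countable (fun k : ℕ => x ^ k)).comp hD'meas)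
    have hmain : ∫⁻ ω, ENNReal.ofReal (x ^ (((insert j T').filter fun l => lam < p ω l).card)) ∂μ
        = (ENNReal.ofReal x * μ A + μ Aᶜ) * G' := by
      rw [← lintegral_add_compl
        (fun ω => ENNReal.ofReal (x ^ (((insert j T').filter fun l => lam < p ω l).card))) hAmeas]
      have hcongr1 : ∫⁻ ω in A,
          ENNReal.ofReal (x ^ (((insert j T').filter fun l => lam < p ω l).card)) ∂μ
          = ∫⁻ ω in A, ENNReal.ofReal x * ENNReal.ofReal (x ^ D' ω) ∂μ := by
        refine setLIntegral_congr_fun hAmeas (fun ω hω => ?_)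
        rw [hcard ω, if_pos (show lam < p ω j from hω), pow_add, pow_one, ENNReal.ofReal_mul hx0]
      have hcongr2 : ∫⁻ ω in Aᶜ,
          ENNReal.ofReal (x ^ (((insert j T').filter fun l => lam < p ω l).card)) ∂μ
          = ∫⁻ ω in Aᶜ, ENNReal.ofReal (x ^ D' ω) ∂μ := by
        refine setLIntegral_congr_fun hAmeas.compl (fun ω hω => ?_)
        rw [hcard ω, if_neg (show ¬ lam < p ω j from hω), zero_add]
      rw [hcongr1, hcongr2, lintegral_const_mul _ hmeasDfun,
        hsplit A hAmeas hprodA, hsplit Aᶜ hAmeas.compl hprodAc]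
      ring
    rw [hmain]
    have hfac : ENNReal.ofReal x * μ A + μ Aᶜ ≤ ENNReal.ofReal (lam + (1-lam)*x) := by
      have hAfin : μ A ≠ ⊤ := measure_ne_top μ A
      have hAcfin : μ Aᶜ ≠ ⊤ := measure_ne_top μ Aᶜ
      set rA : ℝ := (μ A).toReal with hrA
      set rB : ℝ := (μ Aᶜ).toReal with hrB
      have hApos : (0:ℝ) ≤ rA := ENNReal.toReal_nonneg
      have hBpos : (0:ℝ) ≤ rB := ENNReal.toReal_nonneg
      have hAc_eq : Aᶜ = {ω | p ω j ≤ lam} := by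
        ext ω; simp [hA, not_lt]
      have hrBlam : rB ≤ lam := by
        refine ENNReal.toReal_le_of_le_ofReal hlam.1.le ?_
        rw [hAc_eq]; exact hTj
      have hsum1 : rA + rB = 1 := by
        have h := measure_add_measure_compl (μ := μ) hAmeas
        rw [measure_univ] at h
        have h2 := congrArg ENNReal.toReal h
        rw [ENNReal.toReal_add hAfin hAcfin] at h2
        simpa using h2
      have e1 : μ A = ENNReal.ofReal rA := (ENNReal.ofReal_toReal hAfin).symm
      have e2 : μ Aᶜ = ENNReal.ofReal rB := (ENNReal.ofReal_toReal hAcfin).symm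
      rw [e1, e2, ← ENNReal.ofReal_mul hx0, ← ENNReal.ofReal_add (by positivity) hBpos]
      refine ENNReal.ofReal_le_ofReal ?_
      nlinarith [hlam.2]
    calc (ENNReal.ofReal x * μ A + μ Aᶜ) * G'
        ≤ ENNReal.ofReal (lam + (1-lam)*x) * ENNReal.ofReal ((lam + (1-lam)*x) ^ T'.card) :=
          mul_le_mul' hfac (ih hT')
      _ = ENNReal.ofReal ((lam + (1-lam)*x) ^ (insert j T').card) := by
          rw [← ENNReal.ofReal_mul (by nlinarith [hlam.1, hlam.2]),
            Finset.card_insert_of_notMem hj, pow_succ]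
          congr 1
          ring

end Statement2Aux

namespace Statement2Aux
open Finset MeasureTheory ProbabilityTheory intervalIntegral
open scoped ENNReal

lemma integral_affine_pow (lam : ℝ) (hlam : lam ∈ Set.Ioo (0:ℝ) 1) (n : ℕ) :
    ∫ t in (0:ℝ)..1, (lam + (1-lam)*t)^n = (1 - lam^(n+1)) / ((n+1) * (1-lam)) := by
  have h1lam : (0:ℝ) < 1 - lam := by linarith [hlam.2]
  have hcont : Continuous (fun t : ℝ => (lam + (1-lam)*t)^n) := by
    exact (continuous_const.add (continuous_const.mul continuous_id)).pow n
  have hder : ∀ t ∈ Set.uIcc (0:ℝ) 1,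
      HasDerivAt (fun t : ℝ => (lam + (1-lam)*t)^(n+1) / ((n+1) * (1-lam)))
        ((lam + (1-lam)*t)^n) t := by
    intro t _
    have h1 : HasDerivAt (fun t : ℝ => lam + (1-lam)*t) (1-lam) t := by
      simpa using ((hasDerivAt_id t).const_mul (1-lam)).const_add lam
    have h2 := (h1.pow (n+1)).div_const ((n+1) * (1-lam))
    refine h2.congr_deriv ?_
    rw [Nat.add_sub_cancel]
    push_cast
    have hne : ((n:ℝ)+1) * (1-lam) ≠ 0 := by positivity
    field_simp
  rw [integral_eq_sub_of_hasDerivAt hder (hcont.intervalIntegrable 0 1)]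
  have : lam + (1-lam)*1 = 1 := by ring
  rw [this]
  simp only [one_pow, mul_zero, add_zero]
  ring

lemma binomial_bound {Ω : Type*} [MeasurableSpace Ω] (μ : Measure Ω) [IsProbabilityMeasure μ]
    {m : ℕ} {p : Ω → Fin m → ℝ} (hp : Measurable p)
    (hindep : iIndepFun (fun i ω => p ω i) μ)
    {lam : ℝ} (hlam : lam ∈ Set.Ioo (0:ℝ) 1)
    (T : Finset (Fin m)) (hT : ∀ j ∈ T, μ {ω | p ω j ≤ lam} ≤ ENNReal.ofReal lam) :
    ∫⁻ ω, ENNReal.ofReal (1 / (1 + ((T.filter fun j => lam < p ω j).card : ℝ))) ∂μ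
      ≤ ENNReal.ofReal (1 / (((T.card : ℝ) + 1) * (1-lam))) := by
  classical
  have h1lam : (0:ℝ) < 1 - lam := by linarith [hlam.2]
  set n := T.card with hn
  set D : Ω → ℕ := fun ω => (T.filter fun j => lam < p ω j).card with hD
  have hDmeas : Measurable D := by
    have heq : D = fun ω => ∑ l ∈ T, if lam < p ω l then (1:ℕ) else 0 := by
      funext ω
      simp only [hD, Finset.card_filter]
    rw [heq]
    refine Finset.measurable_sum _ (fun l _ => ?_)
    exact Measurable.ite
      (measurableSet_lt measurable_const ((measurable_pi_apply l).comp hp))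
      measurable_const measurable_const
  have hDle : ∀ ω, D ω ≤ n := fun ω => Finset.card_filter_le _ _
  set r : ℕ → ℝ := fun k => (μ {ω | D ω = k}).toReal with hr
  have hrnn : ∀ k, 0 ≤ r k := fun k => ENNReal.toReal_nonneg
  have hofr : ∀ k, μ {ω | D ω = k} = ENNReal.ofReal (r k) :=
    fun k => (ENNReal.ofReal_toReal (measure_ne_top μ _)).symm
  -- representation of a lintegral of a function of D as ofReal of a finite sum
  have hrep : ∀ g : ℕ → ℝ, (∀ k, 0 ≤ g k) →
      ∫⁻ ω, ENNReal.ofReal (g (D ω)) ∂μ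
        = ENNReal.ofReal (∑ k ∈ Finset.range (n+1), r k * g k) := by
    intro g hg
    have e := lintegral_comp_nat μ (f := fun ω => ENNReal.ofReal (g (D ω)))
      D hDmeas hDle (fun k => ENNReal.ofReal (g k)) (fun ω => rfl) MeasurableSet.univ
    rw [← setLIntegral_univ, e]
    rw [ENNReal.ofReal_sum_of_nonneg (fun k _ => mul_nonneg (hrnn k) (hg k))]
    refine Finset.sum_congr rfl (fun k _ => ?_)
    rw [Set.inter_univ, hofr k, ← ENNReal.ofReal_mul (hrnn k)]
  -- real generating function bound
  have hgf : ∀ x ∈ Set.Icc (0:ℝ) 1,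
      ∑ k ∈ Finset.range (n+1), r k * x^k ≤ (lam + (1-lam)*x)^n := by
    intro x hx
    have hEx := gf_bound μ hp hindep hlam hx.1 hx.2 T hT
    rw [show (fun ω => ENNReal.ofReal (x ^ ((T.filter fun j => lam < p ω j).card)))
        = fun ω => ENNReal.ofReal (x ^ D ω) from rfl] at hEx
    rw [hrep (fun k => x^k) (fun k => pow_nonneg hx.1 k)] at hEx
    have hpos : (0:ℝ) ≤ (lam + (1-lam)*x)^n := by
      have : (0:ℝ) ≤ lam + (1-lam)*x := by nlinarith [hlam.1, hx.1]
      positivity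
    exact (ENNReal.ofReal_le_ofReal_iff hpos).mp hEx
  -- integrate the inequality over [0,1]
  have hint1 : IntervalIntegrable (fun x : ℝ => ∑ k ∈ Finset.range (n+1), r k * x^k)
      MeasureTheory.volume 0 1 := by
    refine Continuous.intervalIntegrable ?_ _ _
    exact continuous_finset_sum _ (fun k _ => continuous_const.mul (continuous_pow k))
  have hint2 : IntervalIntegrable (fun x : ℝ => (lam + (1-lam)*x)^n)
      MeasureTheory.volume 0 1 :=
    ((continuous_const.add (continuous_const.mul continuous_id)).pow n).intervalIntegrable _ _
  have hmono := intervalIntegral.integral_mono_on (by norm_num : (0:ℝ) ≤ 1) hint1 hint2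
    (fun x hx => hgf x hx)
  have hlhs : ∫ x in (0:ℝ)..1, (∑ k ∈ Finset.range (n+1), r k * x^k)
      = ∑ k ∈ Finset.range (n+1), r k * (1 / (1 + (k:ℝ))) := by
    rw [intervalIntegral.integral_finset_sum (f := fun k x => r k * x^k)
      (fun k _ => (continuous_const.mul (continuous_pow k)).intervalIntegrable _ _)]
    refine Finset.sum_congr rfl (fun k _ => ?_)
    rw [intervalIntegral.integral_const_mul, integral_pow]
    congr 1
    rw [one_pow, zero_pow (Nat.succ_ne_zero k)]
    push_cast
    ring
  have hrhs := integral_affine_pow lam hlam n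
  have hsum_le : ∑ k ∈ Finset.range (n+1), r k * (1 / (1 + (k:ℝ)))
      ≤ 1 / (((n:ℝ) + 1) * (1-lam)) := by
    have h1 : (1 - lam^(n+1)) / (((n:ℝ)+1) * (1-lam)) ≤ 1 / (((n:ℝ)+1) * (1-lam)) := by
      have hden : (0:ℝ) < ((n:ℝ)+1) * (1-lam) :=
        mul_pos (by linarith [(Nat.cast_nonneg n : (0:ℝ) ≤ n)]) h1lam
      rw [div_le_div_iff₀ hden hden]
      nlinarith [pow_nonneg hlam.1.le (n+1)]
    calc ∑ k ∈ Finset.range (n+1), r k * (1 / (1 + (k:ℝ)))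
        = ∫ x in (0:ℝ)..1, (∑ k ∈ Finset.range (n+1), r k * x^k) := hlhs.symm
      _ ≤ ∫ x in (0:ℝ)..1, (lam + (1-lam)*x)^n := hmono
      _ = (1 - lam^(n+1)) / (((n:ℝ)+1) * (1-lam)) := hrhs
      _ ≤ 1 / (((n:ℝ)+1) * (1-lam)) := h1
  have hfinal := hrep (fun k => 1 / (1 + (k:ℝ)))
    (fun k => by positivity)
  rw [show (fun ω => ENNReal.ofReal (1 / (1 + ((T.filter fun j => lam < p ω j).card : ℝ))))
      = fun ω => ENNReal.ofReal (1 / (1 + (D ω : ℝ))) from rfl]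
  rw [hfinal]
  exact ENNReal.ofReal_le_ofReal hsum_le

end Statement2Aux


set_option maxHeartbeats 2000000 in
/-- Corollary 1, independent setting: for every `λ ∈ (0,1)` and
`α ∈ (0,1)`, the adaptive BH procedure using the `λ`-Storey estimator and no capping
controls the FDR at level `α`. -/
theorem statement2 {Ω : Type*} [MeasurableSpace Ω] (μ : Measure Ω) [IsProbabilityMeasure μ]
    (m : ℕ) (hm : 1 ≤ m) (H0 : Finset (Fin m)) (p : Ω → Fin m → ℝ)
    (hsetting : IndepSetting μ m H0 p)
    (lam : ℝ) (hlam : lam ∈ Set.Ioo (0 : ℝ) 1)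
    (α : ℝ) (hα : α ∈ Set.Ioo (0 : ℝ) 1) :
    FDR μ m H0 α (storey m lam) (fun _ => 1) p ≤ ENNReal.ofReal α := by
  classical
  obtain ⟨hp, hrange, hindep, hsuper⟩ := hsetting
  -- rewrite the FDP as a finite sum of per-hypothesis contributions
  have hFDP : ∀ q : Fin m → ℝ, ENNReal.ofReal (FDP m H0 α (storey m lam) (fun _ => 1) q)
      = ∑ i ∈ H0, Statement2Aux.body m α lam i q := by
    intro q
    have hcard : ((H0.filter fun i => q i ≤ bhThresh m α 1 (storey m lam q)
          (khat m α 1 (storey m lam q) q)).card : ℝ)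
        = ∑ i ∈ H0, (if q i ≤ bhThresh m α 1 (storey m lam q)
            (khat m α 1 (storey m lam q) q) then (1:ℝ) else 0) := by
      rw [Finset.card_filter]
      push_cast
      rfl
    have h1 : FDP m H0 α (storey m lam) (fun _ => 1) q
        = ∑ i ∈ H0, (if q i ≤ bhThresh m α 1 (storey m lam q)
            (khat m α 1 (storey m lam q) q) then (1:ℝ) else 0)
          / (max (khat m α 1 (storey m lam q) q) 1 : ℕ) := by
      simp only [FDP]
      rw [hcard, Finset.sum_div]
    rw [h1, ENNReal.ofReal_sum_of_nonneg (fun i _ => by positivity)]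
    rfl
  -- trivial case: no true nulls
  rcases H0.eq_empty_or_nonempty with hH0e | hH0ne
  · have : FDR μ m H0 α (storey m lam) (fun _ => 1) p = 0 := by
      rw [FDR]
      rw [lintegral_congr (fun ω => hFDP (p ω))]
      simp [hH0e]
    rw [this]
    positivity
  have hn0 : 1 ≤ H0.card := Finset.card_pos.mpr hH0ne
  have hn0R : (0:ℝ) < (H0.card : ℝ) := by exact_mod_cast hn0
  have h1lam : (0:ℝ) < 1 - lam := by linarith [hlam.2]
  -- the key per-hypothesis bound
  have key : ∀ i ∈ H0, ∫⁻ ω, Statement2Aux.body m α lam i (p ω) ∂μ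
      ≤ ENNReal.ofReal (α / (H0.card : ℝ)) := by
    intro i hi
    set T := (Finset.univ : Finset (Fin m)).erase i with hT
    set X : Ω → ℝ := fun ω => p ω i with hX
    set Y : Ω → (↥T → ℝ) := fun ω j => p ω ↑j with hY
    have hXmeas : Measurable X := (measurable_pi_apply i).comp hp
    have hYmeas : Measurable Y :=
      measurable_pi_lambda _ (fun j => (measurable_pi_apply _).comp hp)
    have hfmeas : ∀ j : Fin m, Measurable (fun ω => p ω j) :=
      fun j => (measurable_pi_apply j).comp hp
    have hdisj : Disjoint ({i} : Finset (Fin m)) T :=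
      Finset.disjoint_singleton_left.mpr (Finset.notMem_erase i _)
    have hIF0 := hindep.indepFun_finset {i} T hdisj hfmeas
    have hIF : IndepFun X Y μ := by
      have h := hIF0.comp
        (φ := fun v : (({i} : Finset (Fin m)) → ℝ) => v ⟨i, Finset.mem_singleton_self i⟩)
        (ψ := id) (measurable_pi_apply (⟨i, Finset.mem_singleton_self i⟩ : ({i} : Finset (Fin m))) :
          Measurable fun v : (({i} : Finset (Fin m)) → ℝ) => v ⟨i, Finset.mem_singleton_self i⟩)
        measurable_id
      exact h
    -- gluing function
    set glue : ℝ × (↥T → ℝ) → (Fin m → ℝ) := fun z j =>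
      if h : j = i then z.1 else z.2 ⟨j, Finset.mem_erase.mpr ⟨h, Finset.mem_univ j⟩⟩
      with hglue
    have hglue_meas : Measurable glue := by
      refine measurable_pi_lambda _ (fun j => ?_)
      by_cases h : j = i
      · subst h
        have he : (fun z : ℝ × (↥T → ℝ) => glue z j) = fun z => z.1 := by
          funext z
          simp only [hglue, dif_pos rfl]
        rw [he]
        exact measurable_fst
      · have he : (fun z : ℝ × (↥T → ℝ) => glue z j)
            = fun z => z.2 ⟨j, Finset.mem_erase.mpr ⟨h, Finset.mem_univ j⟩⟩ := by
          funext z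
          simp only [hglue, dif_neg h]
        rw [he]
        exact (measurable_pi_apply _).comp measurable_snd
    have hglueXY : ∀ ω, glue (X ω, Y ω) = p ω := by
      intro ω
      funext j
      by_cases h : j = i
      · subst h
        simp only [hglue, dif_pos rfl, hX]
      · simp only [hglue, dif_neg h, hY]
    set H : ℝ × (↥T → ℝ) → ℝ≥0∞ := fun z => Statement2Aux.body m α lam i (glue z) with hH
    have Hmeas : Measurable H := (Statement2Aux.measurable_body hm hα hlam i).comp hglue_meas
    haveI : IsProbabilityMeasure (μ.map X) := Measure.isProbabilityMeasure_map hXmeas.aemeasurable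
    haveI : IsProbabilityMeasure (μ.map Y) := Measure.isProbabilityMeasure_map hYmeas.aemeasurable
    have hmapeq := (indepFun_iff_map_prod_eq_prod_map_map
      hXmeas.aemeasurable hYmeas.aemeasurable).mp hIF
    have e1 : ∫⁻ ω, Statement2Aux.body m α lam i (p ω) ∂μ = ∫⁻ ω, H (X ω, Y ω) ∂μ :=
      lintegral_congr (fun ω => (congrArg (Statement2Aux.body m α lam i) (hglueXY ω)).symm)
    have e2 : ∫⁻ ω, H (X ω, Y ω) ∂μ = ∫⁻ z, H z ∂(μ.map (fun ω => (X ω, Y ω))) :=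
      (lintegral_map Hmeas (hXmeas.prodMk hYmeas)).symm
    have e3 : ∫⁻ z, H z ∂(μ.map (fun ω => (X ω, Y ω)))
        = ∫⁻ y, ∫⁻ x, H (x, y) ∂(μ.map X) ∂(μ.map Y) := by
      rw [hmapeq]
      exact MeasureTheory.lintegral_prod_symm H Hmeas.aemeasurable
    -- inner bound via the leave-one-out lemma
    have hinner : ∀ y : ↥T → ℝ, ∫⁻ x, H (x, y) ∂(μ.map X)
        ≤ ENNReal.ofReal (α * (1-lam) / (1 + (Statement2Aux.cnt lam (glue (0, y)) : ℝ))) := by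
      intro y
      set w : Fin m → ℝ := glue (0, y) with hw
      have hup : ∀ x : ℝ, glue (x, y) = Function.update w i x := by
        intro x
        funext j
        by_cases h : j = i
        · subst h
          simp only [hglue, dif_pos rfl, Function.update_self]
        · simp only [hglue, Function.update_of_ne h, hw, dif_neg h]
      obtain ⟨u, K, hu0, hu1, hK1, hptw, hfin⟩ := Statement2Aux.loo hm hα hlam w i
      have hb : ∀ x : ℝ, H (x, y)
          ≤ Set.indicator {x' : ℝ | x' ≤ u} (fun _ => ((K : ℝ≥0∞))⁻¹) x := by
        intro x
        have hbody : H (x, y) = Statement2Aux.body m α lam i (Function.update w i x) := by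
          rw [hH]
          simp only
          rw [hup x]
        rw [hbody]
        exact hptw x
      calc ∫⁻ x, H (x, y) ∂(μ.map X)
          ≤ ∫⁻ x, Set.indicator {x' : ℝ | x' ≤ u} (fun _ => ((K : ℝ≥0∞))⁻¹) x ∂(μ.map X) :=
            lintegral_mono hb
        _ = ((K : ℝ≥0∞))⁻¹ * (μ.map X) {x' : ℝ | x' ≤ u} :=
            lintegral_indicator_const measurableSet_Iic _
        _ = ((K : ℝ≥0∞))⁻¹ * μ {ω | p ω i ≤ u} := by
            have hIic : {x' : ℝ | x' ≤ u} = Set.Iic u := rfl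
            rw [hIic, Measure.map_apply hXmeas measurableSet_Iic]
            rfl
        _ ≤ ((K : ℝ≥0∞))⁻¹ * ENNReal.ofReal u :=
            mul_le_mul_right (hsuper i hi u ⟨hu0, hu1⟩) _
        _ = ENNReal.ofReal u * ((K : ℝ≥0∞))⁻¹ := mul_comm _ _
        _ ≤ ENNReal.ofReal (α * (1-lam) / (1 + (Statement2Aux.cnt lam (Function.update w i 0) : ℝ))) := hfin
        _ = ENNReal.ofReal (α * (1-lam) / (1 + (Statement2Aux.cnt lam (glue (0, y)) : ℝ))) := by
            rw [← hup 0]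
    -- outer integral
    set gout : (↥T → ℝ) → ℝ≥0∞ := fun y =>
      ENNReal.ofReal (α * (1-lam) / (1 + (Statement2Aux.cnt lam (glue (0, y)) : ℝ))) with hgout
    have hgoutmeas : Measurable gout := by
      have h0 : Measurable (fun y : ↥T → ℝ => glue (0, y)) :=
        hglue_meas.comp (measurable_const.prodMk measurable_id)
      have h1 : Measurable (fun y : ↥T → ℝ => Statement2Aux.cnt lam (glue (0, y))) :=
        Statement2Aux.measurable_cnt.comp h0
      exact (measurable_of_countable
        (fun c : ℕ => ENNReal.ofReal (α * (1-lam) / (1 + (c : ℝ))))).comp h1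
    have e4 : ∫⁻ y, gout y ∂(μ.map Y) = ∫⁻ ω, gout (Y ω) ∂μ := lintegral_map hgoutmeas hYmeas
    -- compare with the count over true nulls
    set DD : Ω → ℕ := fun ω => ((H0.erase i).filter fun j => lam < p ω j).card with hDD
    have hDDmeas : Measurable DD := by
      have heq : DD = fun ω => ∑ l ∈ H0.erase i, if lam < p ω l then (1:ℕ) else 0 := by
        funext ω
        simp only [hDD, Finset.card_filter]
      rw [heq]
      refine Finset.measurable_sum _ (fun l _ => ?_)
      exact Measurable.ite
        (measurableSet_lt measurable_const ((measurable_pi_apply l).comp hp))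
        measurable_const measurable_const
    have hptb : ∀ ω, gout (Y ω) ≤ ENNReal.ofReal (α * (1-lam) / (1 + (DD ω : ℝ))) := by
      intro ω
      have hglue0 : glue (0, Y ω) = Function.update (p ω) i 0 := by
        funext j
        by_cases h : j = i
        · subst h
          simp only [hglue, dif_pos rfl, Function.update_self]
        · simp only [hglue, dif_neg h, hY, Function.update_of_ne h]
      have hcnt_ge : DD ω ≤ Statement2Aux.cnt lam (glue (0, Y ω)) := by
        rw [hglue0, hDD, Statement2Aux.cnt]
        refine Finset.card_le_card ?_
        intro j hj
        simp only [Finset.mem_filter, Finset.mem_erase] at hj ⊢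
        refine ⟨Finset.mem_univ j, ?_⟩
        rw [Function.update_of_ne hj.1.1]
        exact hj.2
      rw [hgout]
      refine ENNReal.ofReal_le_ofReal ?_
      have hnum : (0:ℝ) ≤ α * (1-lam) := mul_nonneg hα.1.le h1lam.le
      have hden : (0:ℝ) < 1 + (DD ω : ℝ) := by
        have hc := Nat.cast_nonneg (α := ℝ) (DD ω)
        linarith
      refine div_le_div_of_nonneg_left hnum hden ?_
      have : ((DD ω : ℝ)) ≤ (Statement2Aux.cnt lam (glue (0, Y ω)) : ℝ) := by exact_mod_cast hcnt_ge
      linarith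
    have hmeasDDfun : Measurable (fun ω => ENNReal.ofReal (1 / (1 + (DD ω : ℝ)))) :=
      ENNReal.measurable_ofReal.comp
        ((measurable_of_countable (fun k : ℕ => 1 / (1 + (k:ℝ)))).comp hDDmeas)
    have e5 : ∫⁻ ω, ENNReal.ofReal (α * (1-lam) / (1 + (DD ω : ℝ))) ∂μ
        = ENNReal.ofReal (α * (1-lam)) * ∫⁻ ω, ENNReal.ofReal (1 / (1 + (DD ω : ℝ))) ∂μ := by
      rw [← lintegral_const_mul _ hmeasDDfun]
      refine lintegral_congr (fun ω => ?_)
      rw [← ENNReal.ofReal_mul (mul_nonneg hα.1.le h1lam.le)]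
      congr 1
      rw [mul_one_div]
    have hbin := Statement2Aux.binomial_bound μ hp hindep hlam (H0.erase i)
      (fun j hj => hsuper j (Finset.mem_of_mem_erase hj) lam ⟨hlam.1.le, hlam.2.le⟩)
    have hcarderase : (((H0.erase i).card : ℝ)) = (H0.card : ℝ) - 1 := by
      rw [Finset.card_erase_of_mem hi]
      rw [Nat.cast_sub hn0]
      norm_num
    have hfinal_eq : ENNReal.ofReal (α * (1-lam))
        * ENNReal.ofReal (1 / ((((H0.erase i).card : ℝ) + 1) * (1-lam)))
        = ENNReal.ofReal (α / (H0.card : ℝ)) := by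
      rw [← ENNReal.ofReal_mul (mul_nonneg hα.1.le h1lam.le)]
      congr 1
      rw [hcarderase]
      have hne1 : ((H0.card : ℝ) - 1 + 1) = (H0.card : ℝ) := by ring
      rw [hne1]
      field_simp
    calc ∫⁻ ω, Statement2Aux.body m α lam i (p ω) ∂μ
        = ∫⁻ y, ∫⁻ x, H (x, y) ∂(μ.map X) ∂(μ.map Y) := by rw [e1, e2, e3]
      _ ≤ ∫⁻ y, gout y ∂(μ.map Y) := lintegral_mono (fun y => hinner y)
      _ = ∫⁻ ω, gout (Y ω) ∂μ := e4
      _ ≤ ∫⁻ ω, ENNReal.ofReal (α * (1-lam) / (1 + (DD ω : ℝ))) ∂μ := lintegral_mono hptb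
      _ = ENNReal.ofReal (α * (1-lam)) * ∫⁻ ω, ENNReal.ofReal (1 / (1 + (DD ω : ℝ))) ∂μ := e5
      _ ≤ ENNReal.ofReal (α * (1-lam))
          * ENNReal.ofReal (1 / ((((H0.erase i).card : ℝ) + 1) * (1-lam))) :=
            mul_le_mul_right hbin _
      _ = ENNReal.ofReal (α / (H0.card : ℝ)) := hfinal_eq
  -- assemble
  calc FDR μ m H0 α (storey m lam) (fun _ => 1) p
      = ∫⁻ ω, ∑ i ∈ H0, Statement2Aux.body m α lam i (p ω) ∂μ := by
        rw [FDR]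
        exact lintegral_congr (fun ω => hFDP (p ω))
    _ = ∑ i ∈ H0, ∫⁻ ω, Statement2Aux.body m α lam i (p ω) ∂μ :=
        lintegral_finset_sum _ (fun i _ => (Statement2Aux.measurable_body hm hα hlam i).comp hp)
    _ ≤ ∑ _i ∈ H0, ENNReal.ofReal (α / (H0.card : ℝ)) := Finset.sum_le_sum key
    _ = ENNReal.ofReal α := by
        rw [Finset.sum_const, nsmul_eq_mul]
        rw [← ENNReal.ofReal_natCast H0.card,
          ← ENNReal.ofReal_mul (Nat.cast_nonneg H0.card)]
        congr 1
        field_simp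

end
end

section
/- For any vector p = (p_1,…,p_m) ∈ (0,1]^m and any ε ∈ (0,1), the infimum over λ ∈ [0,1−ε] of (1 ∨ #{i : p_i ≥ λ})/(m(1−λ)) equals min(1, min_{λ ∈ {p_1,…,p_m} ∩ (0,1−ε)} (1 ∨ #{i : p_i > λ})/(m(1−λ))), where the minimum over an empty set is taken to be +∞. -/
noncomputable section

open Classical in
/-- identity \eqref{equ:simplifyinfMS}: for `p ∈ (0,1]^m` and
`ε ∈ (0,1)`, the infimum over `λ ∈ [0,1-ε]` of `(1 ∨ #{i : p_i ≥ λ})/(m(1-λ))` equals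
`min(1, min_{λ ∈ {p_1,…,p_m} ∩ (0,1-ε)} (1 ∨ #{i : p_i > λ})/(m(1-λ)))`, the minimum over
the empty set being `+∞` (i.e. `⊤` in `WithTop ℝ`). -/
theorem statement8 (m : ℕ) (hm : 1 ≤ m) (p : Fin m → ℝ)
    (hp : ∀ i, p i ∈ Set.Ioc (0 : ℝ) 1) (ε : ℝ) (hε : ε ∈ Set.Ioo (0 : ℝ) 1) :
    ((sInf ((fun lam =>
        (max 1 ((Finset.univ.filter fun i => lam ≤ p i).card : ℝ)) / (m * (1 - lam))) ''
          Set.Icc 0 (1 - ε)) : ℝ) : WithTop ℝ)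
      = min 1
        (((Finset.univ.filter fun i : Fin m => 0 < p i ∧ p i < 1 - ε).image fun i =>
          (max 1 ((Finset.univ.filter fun j => p i < p j).card : ℝ)) /
            (m * (1 - p i))).min) := by
  obtain ⟨hε0, hε1⟩ := hε
  have hm1 : (1:ℝ) ≤ m := by exact_mod_cast hm
  have hm0 : (0:ℝ) < m := by linarith
  have h1ε : 0 < 1 - ε := by linarith
  set f : ℝ → ℝ := fun lam =>
    (max 1 ((Finset.univ.filter fun i => lam ≤ p i).card : ℝ)) / (m * (1 - lam)) with hfdef
  set g : Fin m → ℝ := fun i =>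
    (max 1 ((Finset.univ.filter fun j => p i < p j).card : ℝ)) / (m * (1 - p i)) with hgdef
  set F : Finset (Fin m) := Finset.univ.filter fun i : Fin m => 0 < p i ∧ p i < 1 - ε with hFdef
  set S : Set ℝ := f '' Set.Icc 0 (1 - ε) with hSdef
  have hmemS : ∀ lam ∈ Set.Icc (0:ℝ) (1 - ε), f lam ∈ S := fun lam h => ⟨lam, h, rfl⟩
  have hSne : S.Nonempty := ⟨f 0, hmemS 0 ⟨le_refl 0, h1ε.le⟩⟩
  have hbdd : BddBelow S := by
    refine ⟨0, ?_⟩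
    rintro x ⟨lam, hlam, rfl⟩
    have : (0:ℝ) ≤ 1 - lam := by have := hlam.2; linarith
    have h1 : (0:ℝ) ≤ max 1 ((Finset.univ.filter fun i => lam ≤ p i).card : ℝ) :=
      le_trans zero_le_one (le_max_left _ _)
    exact div_nonneg h1 (by positivity)
  have hf0 : f 0 = 1 := by
    have huniv : (Finset.univ.filter fun i => (0:ℝ) ≤ p i) = (Finset.univ : Finset (Fin m)) :=
      Finset.filter_true_of_mem fun i _ => (hp i).1.le
    have : f 0 = max 1 (m:ℝ) / (m * (1 - 0)) := by
      rw [hfdef]; simp [huniv]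
    rw [this, max_eq_right hm1]
    field_simp
    norm_num
  have hinf_le_one : sInf S ≤ 1 := hf0 ▸ csInf_le hbdd (hmemS 0 ⟨le_refl 0, h1ε.le⟩)
  -- key inequality: sInf S ≤ g i for i ∈ F
  have hinf_le_g : ∀ i ∈ F, sInf S ≤ g i := by
    intro i hi
    rw [hFdef, Finset.mem_filter] at hi
    obtain ⟨-, hpi0, hpiε⟩ := hi
    set M : ℝ := max 1 ((Finset.univ.filter fun j => p i < p j).card : ℝ) with hMdef
    have hM0 : (0:ℝ) ≤ M := le_trans zero_le_one (le_max_left _ _)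
    have hden : (m:ℝ) * (1 - p i) ≠ 0 := by
      have : 0 < 1 - p i := by linarith
      positivity
    have hcont : ContinuousAt (fun lam : ℝ => M / (m * (1 - lam))) (p i) := by
      refine ContinuousAt.div continuousAt_const ?_ hden
      fun_prop
    have htend : Filter.Tendsto (fun lam : ℝ => M / (m * (1 - lam)))
        (nhdsWithin (p i) (Set.Ioi (p i))) (nhds (g i)) := by
      have := hcont.tendsto
      exact this.mono_left nhdsWithin_le_nhds
    refine ge_of_tendsto htend ?_
    filter_upwards [Ioc_mem_nhdsGT_of_mem (⟨le_refl (p i), hpiε⟩ : p i ∈ Set.Ico (p i) (1 - ε))]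
      with lam hlam
    obtain ⟨hlt, hle⟩ := hlam
    have hmem : f lam ∈ S := hmemS lam ⟨by linarith, hle⟩
    have hsub : (Finset.univ.filter fun j => lam ≤ p j) ⊆
        (Finset.univ.filter fun j => p i < p j) := by
      intro j hj
      rw [Finset.mem_filter] at hj ⊢
      exact ⟨hj.1, lt_of_lt_of_le hlt hj.2⟩
    have hcard : ((Finset.univ.filter fun j => lam ≤ p j).card : ℝ) ≤
        ((Finset.univ.filter fun j => p i < p j).card : ℝ) := by
      exact_mod_cast Finset.card_le_card hsub
    have hflam : f lam ≤ M / (m * (1 - lam)) := by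
      simp only [hfdef, hMdef]
      have hlam1 : (0:ℝ) < 1 - lam := by linarith
      gcongr
    exact le_trans (csInf_le hbdd hmem) hflam
  -- lower bound: L ≤ f lam for all lam
  have hlb : ∀ L : ℝ, L ≤ 1 → (∀ i ∈ F, L ≤ g i) → ∀ x ∈ S, L ≤ x := by
    rintro L hL1 hLg x ⟨lam, ⟨hlam0, hlam1⟩, rfl⟩
    by_cases hex : ∃ j, p j < lam
    · set B : Finset (Fin m) := Finset.univ.filter fun j => p j < lam with hBdef
      have hBne : B.Nonempty := by
        obtain ⟨j, hj⟩ := hex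
        exact ⟨j, by rw [hBdef, Finset.mem_filter]; exact ⟨Finset.mem_univ j, hj⟩⟩
      obtain ⟨i0, hi0B, hmax⟩ := Finset.exists_max_image B p hBne
      have hi0lt : p i0 < lam := by
        rw [hBdef, Finset.mem_filter] at hi0B; exact hi0B.2
      have hi0F : i0 ∈ F := by
        rw [hFdef, Finset.mem_filter]
        exact ⟨Finset.mem_univ i0, (hp i0).1, lt_of_lt_of_le hi0lt hlam1⟩
      have hfiltereq : (Finset.univ.filter fun j => lam ≤ p j) =
          (Finset.univ.filter fun j => p i0 < p j) := by
        ext j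
        simp only [Finset.mem_filter, Finset.mem_univ, true_and]
        constructor
        · intro h; exact lt_of_lt_of_le hi0lt h
        · intro h
          by_contra hcon
          push_neg at hcon
          have hjB : j ∈ B := by
            rw [hBdef, Finset.mem_filter]; exact ⟨Finset.mem_univ j, hcon⟩
          exact absurd (hmax j hjB) (not_le.mpr h)
      have hgf : g i0 ≤ f lam := by
        simp only [hfdef, hgdef]
        rw [hfiltereq]
        have h1 : (0:ℝ) < 1 - lam := by linarith
        have h2 : (0:ℝ) < 1 - p i0 := by linarith
        gcongr
      exact le_trans (hLg i0 hi0F) hgf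
    · push_neg at hex
      have huniv : (Finset.univ.filter fun j => lam ≤ p j) = (Finset.univ : Finset (Fin m)) :=
        Finset.filter_true_of_mem fun j _ => hex j
      have : f lam = max 1 (m:ℝ) / (m * (1 - lam)) := by
        rw [hfdef]; simp [huniv]
      rw [this, max_eq_right hm1]
      have hpos : (0:ℝ) < m * (1 - lam) := by
        have : 0 < 1 - lam := by linarith
        positivity
      have h1f : (1:ℝ) ≤ m / (m * (1 - lam)) := by
        rw [le_div_iff₀ hpos]
        nlinarith
      linarith
  by_cases hF : F.Nonempty
  · have hT : (F.image g).Nonempty := hF.image g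
    set L : ℝ := min 1 ((F.image g).min' hT) with hLdef
    have hkey : sInf S = L := by
      apply le_antisymm
      · apply le_min hinf_le_one
        obtain ⟨i0, hi0, hgi0⟩ := Finset.mem_image.mp ((F.image g).min'_mem hT)
        rw [← hgi0]
        exact hinf_le_g i0 hi0
      · apply le_csInf hSne
        apply hlb
        · exact min_le_left _ _
        · intro i hi
          exact le_trans (min_le_right _ _) (Finset.min'_le _ _ (Finset.mem_image_of_mem g hi))
    rw [hkey, hLdef, ← Finset.coe_min' hT]
    norm_cast
  · rw [Finset.not_nonempty_iff_eq_empty] at hF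
    rw [hF]
    simp only [Finset.image_empty, Finset.min_empty]
    rw [min_eq_left le_top]
    have hkey : sInf S = 1 := by
      apply le_antisymm hinf_le_one
      apply le_csInf hSne
      apply hlb 1 le_rfl
      intro i hi
      rw [hF] at hi
      exact absurd hi (Finset.notMem_empty i)
    rw [hkey]
    norm_cast
end
end

section
/- Let π0 ∈ (0,1), let I(x) = x be the uniform CDF on [0,1], and let F1 be the CDF of a distribution on [0,1] with a Lipschitz continuous density f1. Set F = π0·I + (1−π0)·F1, with density f(x) = π0 + (1−π0)·f1(x). Then the set {π0' ∈ (0,1] : either π0' = 1 and F = I, or π0' < 1 and there exists a CDF F1* of a distribution on [0,1] with a Lipschitz continuous density such that π0'·I + (1−π0')·F1* = F} has a maximum, equal to min_{λ ∈ [0,1]} f(λ), and this value is at least π0. -/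
noncomputable section

open Set intervalIntegral MeasureTheory

lemma aux_nonpos (g : ℝ → ℝ) (hg : ContinuousOn g (Icc 0 1))
    (hint : ∀ x ∈ Icc (0:ℝ) 1, ∫ t in (0:ℝ)..x, g t = 0)
    {x0 : ℝ} (hx0 : x0 ∈ Icc (0:ℝ) 1) : g x0 ≤ 0 := by
  by_contra hpos
  push_neg at hpos
  set ε := g x0 / 2 with hε
  have hε0 : 0 < ε := by positivity
  obtain ⟨δ, hδ0, hδ⟩ := Metric.continuousWithinAt_iff.1 (hg x0 hx0) ε hε0
  set a := max 0 (x0 - δ/2) with ha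
  set b := min 1 (x0 + δ/2) with hb
  obtain ⟨hx00, hx01⟩ := hx0
  have hax : a ≤ x0 := max_le hx00 (by linarith)
  have hxb : x0 ≤ b := le_min hx01 (by linarith)
  have ha0 : 0 ≤ a := le_max_left _ _
  have hb1 : b ≤ 1 := min_le_left _ _
  have hab : a < b := by
    rcases lt_or_eq_of_le hx01 with h | h
    · exact lt_of_le_of_lt hax (lt_min h (by linarith))
    · refine lt_of_lt_of_le ?_ hxb
      exact max_lt (by linarith) (by linarith)
  have hsub : Icc a b ⊆ Icc (0:ℝ) 1 := Icc_subset_Icc ha0 hb1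
  have hgy : ∀ y ∈ Icc a b, ε < g y := by
    intro y hy
    have hy01 : y ∈ Icc (0:ℝ) 1 := hsub hy
    have hd : dist y x0 < δ := by
      rw [Real.dist_eq, abs_lt]
      constructor
      · have : x0 - δ/2 ≤ a := le_max_right _ _
        have := hy.1; linarith
      · have : b ≤ x0 + δ/2 := min_le_right _ _
        have := hy.2; linarith
    have := hδ hy01 hd
    rw [Real.dist_eq, abs_lt] at this
    have := this.1
    linarith [hε0]
  have hint1 : IntervalIntegrable g volume a b := by
    apply ContinuousOn.intervalIntegrable
    apply hg.mono
    rw [uIcc_of_le hab.le]; exact hsub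
  have hpos' : 0 < ∫ t in a..b, g t :=
    intervalIntegral_pos_of_pos_on hint1
      (fun y hy => lt_trans hε0 (hgy y (Ioo_subset_Icc_self hy))) hab
  have hint0a : IntervalIntegrable g volume 0 a := by
    apply ContinuousOn.intervalIntegrable
    apply hg.mono
    rw [uIcc_of_le ha0]; exact Icc_subset_Icc le_rfl (le_trans hab.le hb1)
  have hadd := integral_add_adjacent_intervals hint0a hint1
  have h0a := hint 0 (by simp) -- trivial
  have hA := hint a ⟨ha0, le_trans hab.le hb1⟩
  have hB := hint b ⟨le_trans ha0 hab.le, hb1⟩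
  rw [hA, hB] at hadd
  linarith

lemma aux_eqOn (g1 g2 : ℝ → ℝ) (h1 : ContinuousOn g1 (Icc 0 1))
    (h2 : ContinuousOn g2 (Icc 0 1))
    (heq : ∀ x ∈ Icc (0:ℝ) 1, (∫ t in (0:ℝ)..x, g1 t) = ∫ t in (0:ℝ)..x, g2 t) :
    ∀ x ∈ Icc (0:ℝ) 1, g1 x = g2 x := by
  have key : ∀ (u v : ℝ → ℝ), ContinuousOn u (Icc 0 1) → ContinuousOn v (Icc 0 1) →
      (∀ x ∈ Icc (0:ℝ) 1, (∫ t in (0:ℝ)..x, u t) = ∫ t in (0:ℝ)..x, v t) →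
      ∀ x ∈ Icc (0:ℝ) 1, u x - v x ≤ 0 := by
    intro u v hu hv huv x hx
    apply aux_nonpos (fun t => u t - v t) (hu.sub hv)
    · intro y hy
      have hiu : IntervalIntegrable u volume 0 y := by
        apply ContinuousOn.intervalIntegrable
        apply hu.mono; rw [uIcc_of_le hy.1]; exact Icc_subset_Icc le_rfl hy.2
      have hiv : IntervalIntegrable v volume 0 y := by
        apply ContinuousOn.intervalIntegrable
        apply hv.mono; rw [uIcc_of_le hy.1]; exact Icc_subset_Icc le_rfl hy.2
      rw [integral_sub hiu hiv, huv y hy, sub_self]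
    · exact hx
  intro x hx
  have h12 := key g1 g2 h1 h2 heq x hx
  have h21 := key g2 g1 h2 h1 (fun y hy => (heq y hy).symm) x hx
  linarith


/-- `G` is the CDF of a probability distribution on `[0,1]`: nondecreasing and
right-continuous on `[0,1]`, nonnegative there, with `G 1 = 1`. -/
def IsCDF01 (G : ℝ → ℝ) : Prop :=
  MonotoneOn G (Set.Icc 0 1) ∧
    (∀ x ∈ Set.Ico (0 : ℝ) 1, ContinuousWithinAt G (Set.Ici x) x) ∧
    G 1 = 1 ∧ ∀ x ∈ Set.Icc (0 : ℝ) 1, 0 ≤ G x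

/-- `g` is a Lipschitz continuous density of `G` on `[0,1]`: `g` is Lipschitz on `[0,1]`,
nonnegative, and `G x = ∫_0^x g` on `[0,1]`. -/
def HasLipDensity (G g : ℝ → ℝ) : Prop :=
  (∃ K : NNReal, LipschitzOnWith K g (Set.Icc 0 1)) ∧
    (∀ x ∈ Set.Icc (0 : ℝ) 1, 0 ≤ g x) ∧
    ∀ x ∈ Set.Icc (0 : ℝ) 1, G x = ∫ t in (0 : ℝ)..x, g t

/-- Lemma 3: in the uniform-null mixture model with mixture density
`f(x) = π₀ + (1-π₀) f₁(x)`, the set of null proportions `π₀'` compatible with the mixture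
CDF `F = π₀ I + (1-π₀) F₁` has a maximum, equal to `min_{λ ∈ [0,1]} f(λ)`, and this value
is at least `π₀`. -/
theorem statement13 (π0 : ℝ) (hπ0 : π0 ∈ Set.Ioo (0 : ℝ) 1) (F1 f1 : ℝ → ℝ)
    (hF1 : IsCDF01 F1) (hf1 : HasLipDensity F1 f1)
    (F f : ℝ → ℝ)
    (hF : ∀ x ∈ Set.Icc (0 : ℝ) 1, F x = π0 * x + (1 - π0) * F1 x)
    (hf : ∀ x ∈ Set.Icc (0 : ℝ) 1, f x = π0 + (1 - π0) * f1 x) :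
    IsGreatest
      {π0' : ℝ | π0' ∈ Set.Ioc (0 : ℝ) 1 ∧
        ((π0' = 1 ∧ ∀ x ∈ Set.Icc (0 : ℝ) 1, F x = x) ∨
          (π0' < 1 ∧ ∃ F1' f1' : ℝ → ℝ, IsCDF01 F1' ∧ HasLipDensity F1' f1' ∧
            ∀ x ∈ Set.Icc (0 : ℝ) 1, π0' * x + (1 - π0') * F1' x = F x))}
      (sInf (f '' Set.Icc 0 1)) ∧
    π0 ≤ sInf (f '' Set.Icc 0 1) := by
  obtain ⟨hπ0a, hπ0b⟩ := hπ0
  obtain ⟨⟨K1, hK1⟩, hf1nn, hF1int⟩ := hf1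
  have hf1c : ContinuousOn f1 (Icc 0 1) := hK1.continuousOn
  have hfc : ContinuousOn f (Icc 0 1) :=
    (continuousOn_const.add (continuousOn_const.mul hf1c)).congr (fun x hx => hf x hx)
  obtain ⟨x0, hx0, hmin⟩ := isCompact_Icc.exists_isMinOn ⟨0, by norm_num⟩ hfc
  have hfm : ∀ x ∈ Icc (0:ℝ) 1, f x0 ≤ f x := isMinOn_iff.1 hmin
  have hsinf : sInf (f '' Icc 0 1) = f x0 :=
    IsLeast.csInf_eq ⟨⟨x0, hx0, rfl⟩, by rintro _ ⟨y, hy, rfl⟩; exact hfm y hy⟩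
  rw [hsinf]
  set m := f x0 with hmdef
  have hπm : π0 ≤ m := by
    rw [hmdef, hf x0 hx0]
    have := hf1nn x0 hx0
    nlinarith
  have hm0 : 0 < m := lt_of_lt_of_le hπ0a hπm
  -- integrability helpers
  have hfint : ∀ a b : ℝ, a ∈ Icc (0:ℝ) 1 → b ∈ Icc (0:ℝ) 1 →
      IntervalIntegrable f volume a b := by
    intro a b ha hb
    exact (hfc.mono (uIcc_subset_Icc ha hb)).intervalIntegrable
  have hf1i : ∀ a b : ℝ, a ∈ Icc (0:ℝ) 1 → b ∈ Icc (0:ℝ) 1 →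
      IntervalIntegrable f1 volume a b := by
    intro a b ha hb
    exact (hf1c.mono (uIcc_subset_Icc ha hb)).intervalIntegrable
  have h01 : (0:ℝ) ∈ Icc (0:ℝ) 1 := by norm_num
  have h11 : (1:ℝ) ∈ Icc (0:ℝ) 1 := by norm_num
  -- F is the primitive of f
  have hFint : ∀ x ∈ Icc (0:ℝ) 1, F x = ∫ t in (0:ℝ)..x, f t := by
    intro x hx
    have hcg : (∫ t in (0:ℝ)..x, f t) = ∫ t in (0:ℝ)..x, (π0 + (1 - π0) * f1 t) := by
      apply intervalIntegral.integral_congr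
      intro t ht
      rw [uIcc_of_le hx.1] at ht
      exact hf t ⟨ht.1, le_trans ht.2 hx.2⟩
    rw [hF x hx, hcg, intervalIntegral.integral_add intervalIntegrable_const
      ((hf1i 0 x h01 hx).const_mul _), intervalIntegral.integral_const_mul,
      intervalIntegral.integral_const, hF1int x hx]
    simp
    ring
  have hF1eq1 : F 1 = 1 := by rw [hF 1 h11, hF1.2.2.1]; ring
  have hm1 : m ≤ 1 := by
    have h1 : (∫ t in (0:ℝ)..1, (fun _ => m) t) ≤ ∫ t in (0:ℝ)..1, f t :=
      intervalIntegral.integral_mono_on zero_le_one intervalIntegrable_const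
        (hfint 0 1 h01 h11) hfm
    rw [intervalIntegral.integral_const] at h1
    simp at h1
    rw [← hFint 1 h11, hF1eq1] at h1
    exact h1
  constructor
  constructor
  · -- membership
    refine ⟨⟨hm0, hm1⟩, ?_⟩
    rcases eq_or_lt_of_le hm1 with hm1' | hm1'
    · left
      refine ⟨hm1', fun x hx => ?_⟩
      have hone : ∀ t ∈ Icc (0:ℝ) 1, (1:ℝ) ≤ f t := by
        intro t ht; rw [← hm1']; exact hfm t ht
      have hlow : (x:ℝ) ≤ F x := by
        have := intervalIntegral.integral_mono_on hx.1 intervalIntegrable_const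
          (hfint 0 x h01 hx) (fun t ht => hone t ⟨ht.1, le_trans ht.2 hx.2⟩)
        rw [intervalIntegral.integral_const] at this
        simp at this
        rwa [← hFint x hx] at this
      have hhigh : F x ≤ x := by
        have hup : (1 - x : ℝ) ≤ ∫ t in x..1, f t := by
          have := intervalIntegral.integral_mono_on hx.2 intervalIntegrable_const
            (hfint x 1 hx h11) (fun t ht => hone t ⟨le_trans hx.1 ht.1, ht.2⟩)
          rw [intervalIntegral.integral_const] at this
          simpa using this
        have hadd := intervalIntegral.integral_add_adjacent_intervals
          (hfint 0 x h01 hx) (hfint x 1 hx h11)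
        rw [← hFint x hx, ← hFint 1 h11, hF1eq1] at hadd
        linarith
      linarith
    · right
      refine ⟨hm1', fun x => (F x - m * x) / (1 - m), fun x => (f x - m) / (1 - m), ?_⟩
      have h1m : 0 < 1 - m := by linarith
      set f1' : ℝ → ℝ := fun x => (f x - m) / (1 - m) with hf1'def
      set F1' : ℝ → ℝ := fun x => (F x - m * x) / (1 - m) with hF1'def
      have hf1'c : ContinuousOn f1' (Icc 0 1) :=
        (hfc.sub continuousOn_const).div_const _
      have hf1'nn : ∀ x ∈ Icc (0:ℝ) 1, 0 ≤ f1' x := by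
        intro x hx
        have := hfm x hx
        have : 0 ≤ f x - m := by linarith
        positivity
      have hf1'i : ∀ a b : ℝ, a ∈ Icc (0:ℝ) 1 → b ∈ Icc (0:ℝ) 1 →
          IntervalIntegrable f1' volume a b := by
        intro a b ha hb
        exact (hf1'c.mono (uIcc_subset_Icc ha hb)).intervalIntegrable
      have hF1'int : ∀ x ∈ Icc (0:ℝ) 1, F1' x = ∫ t in (0:ℝ)..x, f1' t := by
        intro x hx
        rw [hF1'def]
        simp only
        rw [hFint x hx, hf1'def]
        simp only
        rw [intervalIntegral.integral_div, intervalIntegral.integral_sub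
          (hfint 0 x h01 hx) intervalIntegrable_const, intervalIntegral.integral_const]
        simp
        ring
      have hF1'mono : MonotoneOn F1' (Icc 0 1) := by
        intro x hx y hy hxy
        rw [hF1'int x hx, hF1'int y hy]
        have hadd := intervalIntegral.integral_add_adjacent_intervals
          (hf1'i 0 x h01 hx) (hf1'i x y hx hy)
        have hnn : 0 ≤ ∫ t in x..y, f1' t :=
          intervalIntegral.integral_nonneg hxy
            (fun u hu => hf1'nn u ⟨le_trans hx.1 hu.1, le_trans hu.2 hy.2⟩)
        linarith
      have hF1'cont : ContinuousOn F1' (Icc 0 1) := by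
        have hint : IntegrableOn f1' (uIcc (0:ℝ) 1) := by
          rw [uIcc_of_le zero_le_one]
          exact hf1'c.integrableOn_Icc
        have := (intervalIntegral.continuousOn_primitive_interval hint)
        rw [uIcc_of_le zero_le_one] at this
        exact this.congr hF1'int
      refine ⟨⟨hF1'mono, ?_, ?_, ?_⟩, ⟨?_, hf1'nn, hF1'int⟩, ?_⟩
      · -- right continuity
        intro x hx
        have hcw : ContinuousWithinAt F1' (Icc 0 1) x := hF1'cont x ⟨hx.1, hx.2.le⟩
        apply hcw.mono_of_mem_nhdsWithin
        have h1 : Iic (1:ℝ) ∈ nhdsWithin x (Ici x) :=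
          mem_nhdsWithin_of_mem_nhds (Iic_mem_nhds hx.2)
        apply Filter.mem_of_superset (Filter.inter_mem h1 self_mem_nhdsWithin)
        rintro y ⟨hy1, hy2⟩
        exact ⟨le_trans hx.1 hy2, hy1⟩
      · -- F1' 1 = 1
        rw [hF1'def]
        simp only
        rw [hF1eq1]
        rw [mul_one, div_self h1m.ne']
      · -- nonneg
        intro x hx
        rw [hF1'int x hx]
        exact intervalIntegral.integral_nonneg hx.1
          (fun u hu => hf1'nn u ⟨hu.1, le_trans hu.2 hx.2⟩)
      · -- Lipschitz
        refine ⟨Real.toNNReal ((1 - π0) * K1 / (1 - m)), ?_⟩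
        rw [lipschitzOnWith_iff_dist_le_mul]
        intro x hx y hy
        have hd1 : dist (f1 x) (f1 y) ≤ K1 * dist x y := hK1.dist_le_mul x hx y hy
        have hco : ((Real.toNNReal ((1 - π0) * K1 / (1 - m)) : NNReal) : ℝ)
            = (1 - π0) * K1 / (1 - m) := by
          rw [Real.coe_toNNReal]
          exact div_nonneg (mul_nonneg (by linarith) K1.coe_nonneg) h1m.le
        rw [hco]
        have hfxy : f1' x - f1' y = (1 - π0) * (f1 x - f1 y) / (1 - m) := by
          rw [hf1'def]
          simp only
          rw [hf x hx, hf y hy]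
          ring
        rw [Real.dist_eq (x := f1' x), hfxy]
        rw [abs_div, abs_mul, abs_of_pos h1m, abs_of_pos (by linarith : (0:ℝ) < 1 - π0),
          div_mul_eq_mul_div, div_le_div_iff₀ h1m h1m]
        have h2 : (1 - π0) * dist (f1 x) (f1 y) ≤ (1 - π0) * (K1 * dist x y) :=
          mul_le_mul_of_nonneg_left hd1 (by linarith)
        rw [Real.dist_eq (x := f1 x)] at h2
        nlinarith [h1m.le]
      · -- mixture identity
        intro x hx
        rw [hF1'def]
        simp only
        field_simp
        ring
  · -- upper bound
    rintro π0' ⟨⟨hp0, hp1⟩, hcase | hcase⟩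
    · obtain ⟨hp1', hFid⟩ := hcase
      have hfone : f x0 = 1 := by
        have := aux_eqOn f (fun _ => 1) hfc continuousOn_const
          (fun x hx => by rw [← hFint x hx, hFid x hx]; simp) x0 hx0
        simpa using this
      rw [hp1', hmdef, hfone]
    · obtain ⟨hp1', F1', f1', hCDF', ⟨⟨K', hK'⟩, hnn', hintF1'⟩, hmix⟩ := hcase
      have hgc : ContinuousOn (fun t => π0' + (1 - π0') * f1' t) (Icc 0 1) :=
        continuousOn_const.add (continuousOn_const.mul hK'.continuousOn)
      have hgi : ∀ x ∈ Icc (0:ℝ) 1, IntervalIntegrable f1' volume 0 x := by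
        intro x hx
        exact (hK'.continuousOn.mono (uIcc_subset_Icc h01 hx)).intervalIntegrable
      have heqint : ∀ x ∈ Icc (0:ℝ) 1,
          (∫ t in (0:ℝ)..x, f t) = ∫ t in (0:ℝ)..x, (π0' + (1 - π0') * f1' t) := by
        intro x hx
        rw [intervalIntegral.integral_add intervalIntegrable_const
          ((hgi x hx).const_mul _), intervalIntegral.integral_const_mul,
          intervalIntegral.integral_const, ← hintF1' x hx, ← hFint x hx,
          ← hmix x hx]
        simp
        ring
      have := aux_eqOn f (fun t => π0' + (1 - π0') * f1' t) hfc hgc heqint x0 hx0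
      have hnn0 := hnn' x0 hx0
      have h' : f x0 = π0' + (1 - π0') * f1' x0 := this
      rw [hmdef, h']
      nlinarith
  · exact hπm

end
end

section
/- In the independent two-group model over Θ_{⪰U}, assume π0*(θ) > π̲0, let a = 1 if λ* > 1−ε and a = 0 otherwise, and let Δ ∈ [0,1] satisfy C(m,ε,π̲0) − 1 ≤ Δ and π0*(θ)·ε > (1+Δ)/m. Then P( π̂^MS_{0,ε,π̲0} ≥ π0*(θ) + 4·π0*(θ)·Δ + 2·a·L(f)·ε ) ≤ e^{−2m·ε²·Δ²·(π0*(θ))²}. -/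
open MeasureTheory ProbabilityTheory
open scoped ENNReal

noncomputable section

/-- The least favorable null distribution `Q_{0,s}` on `Fin s → ℝ` in the independent
setting: first coordinate `0`, remaining coordinates i.i.d. uniform on `(0,1)`. -/
def Q0 (s : ℕ) : Measure (Fin s → ℝ) :=
  Measure.pi fun i =>
    if (i : ℕ) = 0 then Measure.dirac 0 else volume.restrict (Set.Ioo 0 1)

open Classical in
/-- Inner random quantity in the normalizing factor `c(s,ε)`:
`1 ∨ max_{λ ∈ {q_i} ∩ (0,1-ε)} s(1-λ)/(1 ∨ #{i : q_i > λ})` (empty max taken as `1`). -/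
def cInner (s : ℕ) (ε : ℝ) (q : Fin s → ℝ) : ℝ :=
  max 1
    ((((Finset.univ.filter fun i : Fin s => 0 < q i ∧ q i < 1 - ε).image fun i =>
        (s : ℝ) * (1 - q i) /
          max 1 ((Finset.univ.filter fun j => q i < q j).card : ℝ)).max).unbotD 1)

/-- The quantity `c(s,ε)`. -/
def cVal (s : ℕ) (ε : ℝ) : ℝ := ∫ q, cInner s ε q ∂(Q0 s)

open Classical in
/-- The normalizing factor `C(m,ε,π̲₀) = max{c(s,ε) : π̲₀ m ≤ s ≤ m}`. -/
def Cfac (m : ℕ) (ε pl : ℝ) : ℝ :=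
  ((((Finset.range (m + 1)).filter fun s : ℕ => pl * (m : ℝ) ≤ (s : ℝ)).image fun s =>
    cVal s ε).max).unbotD 1

open Classical in
/-- Inner random quantity in the normalizing factor `d(s,ε)`: the maximum, over open
intervals `I = (a,b)` with `0 ≤ a ≤ b - ε` and endpoints in `{q_i} ∪ {0,1}`, of
`s(b-a)/(1 ∨ #{i : q_i ∈ I})`. -/
def dInner (s : ℕ) (ε : ℝ) (q : Fin s → ℝ) : ℝ :=
  (((((Finset.univ.image q) ∪ {0, 1}) ×ˢ ((Finset.univ.image q) ∪ {0, 1})).filter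
      (fun ab : ℝ × ℝ => 0 ≤ ab.1 ∧ ab.1 ≤ ab.2 - ε)).image fun ab =>
        (s : ℝ) * (ab.2 - ab.1) /
          max 1 ((Finset.univ.filter fun i => ab.1 < q i ∧ q i < ab.2).card : ℝ)).max.unbotD 0

/-- The quantity `d(s,ε)`. -/
def dVal (s : ℕ) (ε : ℝ) : ℝ := ∫ q, dInner s ε q ∂(Q0 s)

open Classical in
/-- The normalizing factor `D(m,ε,π̲₀) = max{d(s,ε) : π̲₀ m ≤ s ≤ m}`. -/
def Dfac (m : ℕ) (ε pl : ℝ) : ℝ :=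
  ((((Finset.range (m + 1)).filter fun s : ℕ => pl * (m : ℝ) ≤ (s : ℝ)).image fun s =>
    dVal s ε).max).unbotD 1

open Classical in
/-- `inf_{λ ∈ [0,1-ε]} (1 ∨ #{i : p_i ≥ λ})/(m(1-λ))`. -/
def msInf (m : ℕ) (ε : ℝ) (p : Fin m → ℝ) : ℝ :=
  sInf ((fun lam =>
    (max 1 ((Finset.univ.filter fun i => lam ≤ p i).card : ℝ)) / (m * (1 - lam))) ''
      Set.Icc 0 (1 - ε))

/-- The min-Storey estimator `π̂^MS_{0,ε,π̲₀}`. -/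
def msEst (m : ℕ) (ε pl : ℝ) (p : Fin m → ℝ) : ℝ :=
  max pl (Cfac m ε pl * msInf m ε p)

open Classical in
/-- `inf` over open intervals `I = (a,b) ⊆ [κ,1]` with `|I| ≥ ε` of
`(1 ∨ #{i : p_i ∈ I})/(m |I|)`. -/
def imsInf (m : ℕ) (ε κ : ℝ) (p : Fin m → ℝ) : ℝ :=
  sInf {x : ℝ | ∃ a b : ℝ, κ ≤ a ∧ b ≤ 1 ∧ ε ≤ b - a ∧
    x = (max 1 ((Finset.univ.filter fun i => a < p i ∧ p i < b).card : ℝ)) / (m * (b - a))}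

/-- The interval-min-Storey estimator `π̂^IMS_{0,ε,π̲₀,κ}`. -/
def imsEst (m : ℕ) (ε pl κ : ℝ) (p : Fin m → ℝ) : ℝ :=
  max pl (Dfac m ε pl * imsInf m ε κ p)

open Classical in
/-- Empirical CDF `F̂_m(t) = m⁻¹ #{i : p_i ≤ t}`. -/
def Fhat (m : ℕ) (p : Fin m → ℝ) (t : ℝ) : ℝ :=
  ((Finset.univ.filter fun i => p i ≤ t).card : ℝ) / m

/-- The data-driven capping `κ̂ = sup{κ ∈ [0,1-ε] : F̂_m(κ) ≥ κ π̂^IMS_{0,ε,π̲₀,κ}/α}`. -/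
def kappaHat (m : ℕ) (ε pl α : ℝ) (p : Fin m → ℝ) : ℝ :=
  sSup {κ : ℝ | κ ∈ Set.Icc 0 (1 - ε) ∧ κ * imsEst m ε pl κ p / α ≤ Fhat m p κ}

/-- i.i.d. two-group model: the `p`-values `p_1,…,p_m` take values in `[0,1]` and are
i.i.d. with CDF `F`. -/
def IIDModel {Ω : Type*} [MeasurableSpace Ω] (μ : Measure Ω) (m : ℕ)
    (p : Ω → Fin m → ℝ) (F : ℝ → ℝ) : Prop :=
  Measurable p ∧ (∀ ω i, p ω i ∈ Set.Icc (0 : ℝ) 1) ∧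
    iIndepFun (fun i ω => p ω i) μ ∧
    ∀ i, ∀ t ∈ Set.Icc (0 : ℝ) 1, μ {ω | p ω i ≤ t} = ENNReal.ofReal (F t)

/-- The identifiable null proportion `π₀*(θ) = inf_{λ ∈ [0,1)} (1-F(λ))/(1-λ)` in the
super-uniform model. -/
def pi0StarSU (F : ℝ → ℝ) : ℝ :=
  sInf ((fun lam => (1 - F lam) / (1 - lam)) '' Set.Ico 0 1)

/-- `λ* = min{λ ∈ [0,1] : (1-F(λ))/(1-λ) = π₀*(θ)}`, with the convention `λ* = 1` when the
infimum is approached only as `λ → 1`. -/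
def lamStarSU (F : ℝ → ℝ) : ℝ :=
  sInf ({lam : ℝ | lam ∈ Set.Ico (0 : ℝ) 1 ∧ (1 - F lam) / (1 - lam) = pi0StarSU F} ∪ {1})

section AuxiliaryLemmas
open MeasureTheory ProbabilityTheory Real Set

lemma hoeff_alg (q s : ℝ) (hq0 : 0 ≤ q) (hq1 : q ≤ 1) (hs : 0 ≤ s) :
    1 - q + q * Real.exp s ≤ Real.exp (q * s + s ^ 2 / 8) := by
  have hD : ∀ x : ℝ, 0 < 1 - q + q * Real.exp x := by
    intro x
    rcases hq0.eq_or_lt with h | h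
    · simp [← h]
    · nlinarith [Real.exp_pos x]
  set D : ℝ → ℝ := fun x => 1 - q + q * Real.exp x with hDdef
  set u : ℝ → ℝ := fun x => q * Real.exp x / D x with hudef
  have hDdAt : ∀ x, HasDerivAt D (q * Real.exp x) x := by
    intro x
    exact ((Real.hasDerivAt_exp x).const_mul q).const_add (1 - q)
  have hud : ∀ x, HasDerivAt u (u x - u x ^ 2) x := by
    intro x
    have h := ((Real.hasDerivAt_exp x).const_mul q).div (hDdAt x) (hD x).ne'
    refine HasDerivAt.congr_deriv h ?_
    have hne : (1 - q + q * Real.exp x) ≠ 0 := (hD x).ne'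
    simp only [hudef, hDdef]
    field_simp
  set g1 : ℝ → ℝ := fun x => q + x / 4 - u x with hg1def
  have hg1d : ∀ x, HasDerivAt g1 ((1 / 2 - u x) ^ 2) x := by
    intro x
    have h := ((hasDerivAt_id x).div_const 4).const_add q |>.sub (hud x)
    refine HasDerivAt.congr_deriv h ?_
    ring
  set g : ℝ → ℝ := fun x => q * x + x ^ 2 / 8 - Real.log (D x) with hgdef
  have hgd : ∀ x, HasDerivAt g (g1 x) x := by
    intro x
    have hlog : HasDerivAt (fun y => Real.log (D y)) (q * Real.exp x / D x) x :=
      (hDdAt x).log (hD x).ne'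
    have h := (((hasDerivAt_id x).const_mul q).add
      (((hasDerivAt_pow 2 x)).div_const 8)).sub hlog
    refine HasDerivAt.congr_deriv h ?_
    simp only [hg1def, hudef]
    ring
  have hg1mono : Monotone g1 :=
    monotone_of_deriv_nonneg (fun x => (hg1d x).differentiableAt)
      (fun x => by rw [(hg1d x).deriv]; positivity)
  have hg10 : g1 0 = 0 := by
    simp only [hg1def, hudef, hDdef]
    simp
  have hg1nn : ∀ x ∈ Set.Ici (0:ℝ), 0 ≤ g1 x := fun x hx => hg10 ▸ hg1mono hx
  have hgmono : MonotoneOn g (Set.Ici 0) := by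
    refine monotoneOn_of_deriv_nonneg (convex_Ici 0)
      (Continuous.continuousOn (continuous_iff_continuousAt.mpr fun x => (hgd x).continuousAt))
      (fun x _ => (hgd x).differentiableAt.differentiableWithinAt)
      (fun x hx => by rw [(hgd x).deriv]; exact hg1nn x (le_of_lt (by simpa using hx)))
  have hg0 : g 0 = 0 := by simp only [hgdef, hDdef]; simp
  have hgs : 0 ≤ g s := hg0 ▸ hgmono Set.self_mem_Ici hs hs
  have hlogle : Real.log (D s) ≤ q * s + s ^ 2 / 8 := by
    simp only [hgdef] at hgs; linarith
  calc 1 - q + q * Real.exp s = D s := rfl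
    _ = Real.exp (Real.log (D s)) := (Real.exp_log (hD s)).symm
    _ ≤ _ := Real.exp_le_exp.mpr hlogle

lemma chernoff_bernoulli {Ω : Type*} [MeasurableSpace Ω] (μ : Measure Ω)
    [IsProbabilityMeasure μ] (m : ℕ) (X : Fin m → Ω → ℝ)
    (hind : iIndepFun X μ)
    (hmeas : ∀ i, Measurable (X i))
    (hval : ∀ i ω, X i ω = 0 ∨ X i ω = 1)
    (q : ℝ) (hq0 : 0 ≤ q) (hq1 : q ≤ 1)
    (hq : ∀ i, (μ {ω | X i ω = 1}).toReal ≤ q)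
    (t : ℝ) (ht : 0 ≤ t) :
    μ {ω | (m : ℝ) * (q + t) ≤ ∑ i, X i ω} ≤ ENNReal.ofReal (Real.exp (-2 * m * t ^ 2)) := by
  set s : ℝ := 4 * t with hsdef
  have hs : 0 ≤ s := by positivity
  have hXind : ∀ i, X i = Set.indicator {ω | X i ω = 1} (fun _ => (1:ℝ)) := by
    intro i
    ext ω
    rcases hval i ω with h | h <;> simp [Set.indicator, h]
  have hXint : ∀ i, Integrable (X i) μ := by
    intro i
    rw [hXind i]
    exact (integrable_const (1:ℝ)).indicator ((hmeas i) (measurableSet_singleton 1))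
  have hEX : ∀ i, ∫ ω, X i ω ∂μ ≤ q := by
    intro i
    have hA : MeasurableSet {ω | X i ω = 1} := hmeas i (measurableSet_singleton 1)
    rw [show (fun ω => X i ω) = Set.indicator {ω | X i ω = 1} (fun _ => (1:ℝ)) from hXind i]
    rw [integral_indicator_const (1:ℝ) hA]
    simpa [measureReal_def] using hq i
  have hexp_eq : ∀ i ω, Real.exp (s * X i ω) = (Real.exp s - 1) * X i ω + 1 := by
    intro i ω
    rcases hval i ω with h | h <;> simp [h]
  have hint : ∀ i, Integrable (fun ω => Real.exp (s * X i ω)) μ := by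
    intro i
    simp_rw [hexp_eq i]
    exact ((hXint i).const_mul _).add (integrable_const 1)
  have hmgf : ∀ i, mgf (X i) μ s ≤ 1 - q + q * Real.exp s := by
    intro i
    rw [mgf]
    simp_rw [hexp_eq i]
    rw [integral_add ((hXint i).const_mul _) (integrable_const 1),
      integral_const_mul, integral_const]
    simp only [measure_univ, probReal_univ, ENNReal.toReal_one, smul_eq_mul, one_mul]
    have h1 : Real.exp s - 1 ≥ 0 := by linarith [Real.one_le_exp hs]
    nlinarith [hEX i]
  have hSmeas : Measurable (fun ω => ∑ i, X i ω) := by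
    exact Finset.measurable_sum _ fun i _ => hmeas i
  have hSbound : ∀ ω, ∑ i, X i ω ≤ (m : ℝ) := by
    intro ω
    calc ∑ i, X i ω ≤ ∑ _i : Fin m, (1:ℝ) := by
          refine Finset.sum_le_sum fun i _ => ?_
          rcases hval i ω with h | h <;> simp [h]
      _ = m := by simp
  have hSint : Integrable (fun ω => Real.exp (s * ∑ i, X i ω)) μ := by
    refine Integrable.mono' (integrable_const (Real.exp (s * m)))
      ((hSmeas.const_mul s).exp.aestronglyMeasurable) (ae_of_all _ fun ω => ?_)
    rw [Real.norm_eq_abs, abs_of_pos (Real.exp_pos _)]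
    exact Real.exp_le_exp.mpr (mul_le_mul_of_nonneg_left (hSbound ω) hs)
  have hchern := measure_ge_le_exp_mul_mgf (μ := μ) (X := fun ω => ∑ i, X i ω)
    ((m : ℝ) * (q + t)) hs hSint
  have hmgfle : mgf (fun ω => ∑ i, X i ω) μ s ≤ Real.exp (m * (q * s + s ^ 2 / 8)) := by
    have h1 : (fun ω => ∑ i, X i ω) = ∑ i, X i := by ext ω; simp
    rw [h1, hind.mgf_sum hmeas Finset.univ]
    calc ∏ i : Fin m, mgf (X i) μ s ≤ ∏ _i : Fin m, Real.exp (q * s + s ^ 2 / 8) := by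
          refine Finset.prod_le_prod (fun i _ => mgf_nonneg) (fun i _ => ?_)
          exact le_trans (hmgf i) (hoeff_alg q s hq0 hq1 hs)
      _ = (Real.exp (q * s + s ^ 2 / 8)) ^ m := by
          rw [Finset.prod_const, Finset.card_univ, Fintype.card_fin]
      _ = Real.exp (m * (q * s + s ^ 2 / 8)) := by
          rw [← Real.exp_nat_mul]
  have hfinal : (μ {ω | (m : ℝ) * (q + t) ≤ ∑ i, X i ω}).toReal ≤
      Real.exp (-2 * m * t ^ 2) := by
    refine hchern.trans ?_
    calc Real.exp (-s * ((m : ℝ) * (q + t))) * mgf (fun ω => ∑ i, X i ω) μ s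
        ≤ Real.exp (-s * ((m : ℝ) * (q + t))) * Real.exp (m * (q * s + s ^ 2 / 8)) := by
          exact mul_le_mul_of_nonneg_left hmgfle (Real.exp_pos _).le
      _ = Real.exp (-s * ((m : ℝ) * (q + t)) + m * (q * s + s ^ 2 / 8)) := by
          rw [← Real.exp_add]
      _ = Real.exp (-2 * m * t ^ 2) := by
          congr 1
          rw [hsdef]
          ring
  calc μ {ω | (m : ℝ) * (q + t) ≤ ∑ i, X i ω}
      = ENNReal.ofReal ((μ {ω | (m : ℝ) * (q + t) ≤ ∑ i, X i ω}).toReal) := by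
        rw [ENNReal.ofReal_toReal (measure_ne_top _ _)]
    _ ≤ _ := ENNReal.ofReal_le_ofReal hfinal


lemma F_diff (F f : ℝ → ℝ) (L : ℝ) (hL : 0 ≤ L)
    (hfLip : LipschitzOnWith (Real.toNNReal L) f (Set.Icc 0 1))
    (hf_nonneg : ∀ x ∈ Set.Icc (0 : ℝ) 1, 0 ≤ f x)
    (hf_dens : ∀ x ∈ Set.Icc (0 : ℝ) 1, F x = ∫ t in (0 : ℝ)..x, f t) :
    ∀ x ∈ Set.Icc (0:ℝ) 1, ∀ y ∈ Set.Icc (0:ℝ) 1, x ≤ y →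
      0 ≤ F y - F x ∧ F y - F x ≤ (f 0 + L) * (y - x) := by
  have hfc : ContinuousOn f (Set.Icc 0 1) := hfLip.continuousOn
  have hbound : ∀ z ∈ Set.Icc (0:ℝ) 1, f z ≤ f 0 + L := by
    intro z hz
    have := hfLip.dist_le_mul z hz 0 (by constructor <;> norm_num)
    rw [Real.dist_eq, Real.dist_eq, Real.coe_toNNReal L hL] at this
    have h1 : |f z - f 0| ≤ L * |z| := by simpa using this
    have h2 : |z| ≤ 1 := by rw [abs_of_nonneg hz.1]; exact hz.2
    have := (abs_le.mp h1).2
    nlinarith [abs_nonneg z, (abs_le.mp h1).2]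
  have hint : ∀ x ∈ Set.Icc (0:ℝ) 1, ∀ y ∈ Set.Icc (0:ℝ) 1,
      IntervalIntegrable f volume x y := by
    intro x hx y hy
    have h01 : Set.uIcc (0:ℝ) 1 = Set.Icc 0 1 := Set.uIcc_of_le (by norm_num)
    refine (hfc.mono ?_).intervalIntegrable
    refine (Set.uIcc_subset_uIcc (a₁ := x) (b₁ := y) (by rw [h01]; exact hx)
      (by rw [h01]; exact hy)).trans ?_
    rw [h01]
  intro x hx y hy hxy
  have heq : F y - F x = ∫ t in x..y, f t := by
    rw [hf_dens x hx, hf_dens y hy,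
      ← intervalIntegral.integral_add_adjacent_intervals
        (hint 0 (by norm_num) x hx) (hint x hx y hy)]
    ring
  have hsub : Set.Icc x y ⊆ Set.Icc (0:ℝ) 1 := Set.Icc_subset_Icc hx.1 hy.2
  constructor
  · rw [heq]
    exact intervalIntegral.integral_nonneg hxy fun u hu => hf_nonneg u (hsub hu)
  · rw [heq]
    calc ∫ t in x..y, f t ≤ ∫ _t in x..y, (f 0 + L) := by
          refine intervalIntegral.integral_mono_on hxy (hint x hx y hy)
            (intervalIntegrable_const) fun u hu => hbound u (hsub hu)
      _ = (f 0 + L) * (y - x) := by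
          rw [intervalIntegral.integral_const, smul_eq_mul]; ring

lemma exists_lam0 (F f : ℝ → ℝ) (L ε : ℝ) (hL : 0 ≤ L) (hε : ε ∈ Set.Ioo (0:ℝ) 1)
    (hFcont : ContinuousOn F (Set.Icc 0 1))
    (hmono : MonotoneOn F (Set.Icc 0 1)) (hF1 : F 1 = 1)
    (hfLip : LipschitzOnWith (Real.toNNReal L) f (Set.Icc 0 1))
    (hf_nonneg : ∀ x ∈ Set.Icc (0 : ℝ) 1, 0 ≤ f x)
    (hf_dens : ∀ x ∈ Set.Icc (0 : ℝ) 1, F x = ∫ t in (0 : ℝ)..x, f t) :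
    ∃ lam0 ∈ Set.Icc (0:ℝ) (1-ε), (1 - F lam0)/(1 - lam0) ≤
      pi0StarSU F + (if 1-ε < lamStarSU F then (1:ℝ) else 0) * L * ε := by
  obtain ⟨hε0, hε1⟩ := hε
  set r : ℝ → ℝ := fun lam => (1 - F lam) / (1 - lam) with hrdef
  have hrnonneg : ∀ lam ∈ Set.Ico (0:ℝ) 1, 0 ≤ r lam := by
    intro lam hlam
    have hF1' : F lam ≤ 1 := hF1 ▸ hmono ⟨hlam.1, hlam.2.le⟩ (by norm_num) hlam.2.le
    have h2 : (0:ℝ) < 1 - lam := by linarith [hlam.2]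
    exact div_nonneg (by linarith) h2.le
  have hbdd : BddBelow (r '' Set.Ico 0 1) := by
    refine ⟨0, fun y hy => ?_⟩
    obtain ⟨lam, hlam, rfl⟩ := hy
    exact hrnonneg lam hlam
  have hne : (r '' Set.Ico 0 1).Nonempty := ⟨r 0, 0, by constructor <;> norm_num, rfl⟩
  have hpi_le : ∀ lam ∈ Set.Ico (0:ℝ) 1, pi0StarSU F ≤ r lam := by
    intro lam hlam
    exact csInf_le hbdd ⟨lam, hlam, rfl⟩
  have hrcont : ∀ b : ℝ, b < 1 → ContinuousOn r (Set.Icc 0 b) := by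
    intro b hb
    refine ContinuousOn.div (continuousOn_const.sub (hFcont.mono ?_))
      (continuousOn_const.sub continuousOn_id) (fun x hx => ?_)
    · exact fun x hx => ⟨hx.1, le_trans hx.2 hb.le⟩
    · have : x < 1 := lt_of_le_of_lt hx.2 hb
      simp only [Set.mem_Icc] at *
      intro h; linarith [sub_eq_zero.mp h]
  set S : Set ℝ := {lam : ℝ | lam ∈ Set.Ico (0 : ℝ) 1 ∧ r lam = pi0StarSU F} with hSdef
  have hSbdd : BddBelow S := ⟨0, fun x hx => hx.1.1⟩
  have hlamstar : lamStarSU F = sInf (S ∪ {1}) := rfl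
  have hSUbdd : BddBelow (S ∪ {1}) := by
    refine ⟨0, fun x hx => ?_⟩
    rcases hx with hx | hx
    · exact hx.1.1
    · rw [Set.mem_singleton_iff] at hx
      rw [hx]; norm_num
  by_cases hcase : 1 - ε < lamStarSU F
  · -- a = 1 : take lam0 = 1 - ε
    rw [if_pos hcase]
    refine ⟨1 - ε, ⟨by linarith, le_refl _⟩, ?_⟩
    -- minimizer of r on [0, 1-ε]
    obtain ⟨c, hc, hcmin⟩ := (isCompact_Icc (a := (0:ℝ)) (b := 1-ε)).exists_isMinOn
      ⟨0, by constructor <;> linarith⟩ (hrcont (1-ε) (by linarith))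
    have hcIco : c ∈ Set.Ico (0:ℝ) 1 := ⟨hc.1, by linarith [hc.2]⟩
    have hvgt : pi0StarSU F < r c := by
      rcases lt_or_eq_of_le (hpi_le c hcIco) with h | h
      · exact h
      · exfalso
        have hcS : c ∈ S := ⟨hcIco, h.symm⟩
        have : lamStarSU F ≤ c := by
          rw [hlamstar]
          exact csInf_le hSUbdd (Or.inl hcS)
        linarith [hc.2]
    -- minimizer of f on [1-ε, 1]
    have hsub1 : Set.Icc (1-ε) 1 ⊆ Set.Icc (0:ℝ) 1 := Set.Icc_subset_Icc (by linarith) le_rfl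
    obtain ⟨y0, hy0, hy0min⟩ := (isCompact_Icc (a := (1-ε)) (b := (1:ℝ))).exists_isMinOn
      ⟨1, by constructor <;> linarith⟩ (hfLip.continuousOn.mono hsub1)
    have hintf : ∀ x ∈ Set.Icc (0:ℝ) 1, ∀ y ∈ Set.Icc (0:ℝ) 1,
        IntervalIntegrable f volume x y := by
      intro x hx y hy
      have h01 : Set.uIcc (0:ℝ) 1 = Set.Icc 0 1 := Set.uIcc_of_le (by norm_num)
      refine ((hfLip.continuousOn.mono ?_)).intervalIntegrable
      refine (Set.uIcc_subset_uIcc (a₁ := x) (b₁ := y) (by rw [h01]; exact hx)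
        (by rw [h01]; exact hy)).trans ?_
      rw [h01]
    have h1F : ∀ lam ∈ Set.Icc (0:ℝ) 1, 1 - F lam = ∫ t in lam..1, f t := by
      intro lam hlam
      have := intervalIntegral.integral_add_adjacent_intervals
        (hintf 0 (by norm_num) lam hlam) (hintf lam hlam 1 (by norm_num))
      rw [hf_dens lam hlam, ← hf_dens 1 (by norm_num), hF1] at *
      linarith [this]
    have hr_low : ∀ lam ∈ Set.Ico (1-ε) 1, f y0 ≤ r lam := by
      intro lam hlam
      have hlam01 : lam ∈ Set.Icc (0:ℝ) 1 := ⟨by linarith [hlam.1], hlam.2.le⟩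
      have hpos : (0:ℝ) < 1 - lam := by linarith [hlam.2]
      have hIlow : (1 - lam) * f y0 ≤ ∫ t in lam..1, f t := by
        have : ∫ (_t : ℝ) in lam..1, f y0 ≤ ∫ t in lam..1, f t := by
          refine intervalIntegral.integral_mono_on hlam.2.le intervalIntegrable_const
            (hintf lam hlam01 1 (by norm_num)) (fun u hu => ?_)
          exact hy0min (Set.Icc_subset_Icc hlam.1 le_rfl hu)
        rwa [intervalIntegral.integral_const, smul_eq_mul] at this
      rw [hrdef]
      simp only
      rw [h1F lam hlam01, le_div_iff₀ hpos]
      linarith [hIlow]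
    have hr_up : r (1-ε) ≤ f y0 + L * ε := by
      have h1ε : (1-ε : ℝ) ∈ Set.Icc (0:ℝ) 1 := ⟨by linarith, by linarith⟩
      have hIup : ∫ t in (1-ε)..1, f t ≤ ε * (f y0 + L * ε) := by
        have hb : ∀ u ∈ Set.Icc (1-ε) 1, f u ≤ f y0 + L * ε := by
          intro u hu
          have hd := hfLip.dist_le_mul u (hsub1 hu) y0 (hsub1 hy0)
          rw [Real.dist_eq, Real.dist_eq, Real.coe_toNNReal L hL] at hd
          have h1 : |u - y0| ≤ ε := by
            rw [abs_le]
            constructor <;> [linarith [hu.1, hy0.2]; linarith [hu.2, hy0.1]]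
          have h2 := (abs_le.mp hd).2
          nlinarith [abs_nonneg (u - y0)]
        have : ∫ t in (1-ε)..1, f t ≤ ∫ (_t : ℝ) in (1-ε)..1, (f y0 + L * ε) := by
          refine intervalIntegral.integral_mono_on (by linarith) (hintf (1-ε) h1ε 1 (by norm_num))
            intervalIntegrable_const (fun u hu => hb u hu)
        rwa [intervalIntegral.integral_const, smul_eq_mul, show (1 - (1-ε)) = ε by ring] at this
      rw [hrdef]
      simp only
      rw [h1F (1-ε) h1ε, div_le_iff₀ (by linarith : (0:ℝ) < 1 - (1-ε))]
      calc ∫ t in (1-ε)..1, f t ≤ ε * (f y0 + L * ε) := hIup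
        _ = (f y0 + L * ε) * (1 - (1-ε)) := by ring
    -- lower bound on pi0Star
    have hmin_le : min (r c) (r (1-ε) - L * ε) ≤ pi0StarSU F := by
      refine le_csInf hne (fun y hy => ?_)
      obtain ⟨lam, hlam, rfl⟩ := hy
      rcases le_or_gt lam (1-ε) with h | h
      · exact le_trans (min_le_left _ _) (hcmin ⟨hlam.1, h⟩)
      · refine le_trans (min_le_right _ _) ?_
        have := hr_low lam ⟨h.le, hlam.2⟩
        linarith [this]
    rcases le_total (r c) (r (1-ε) - L * ε) with h | h
    · exfalso
      rw [min_eq_left h] at hmin_le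
      linarith
    · rw [min_eq_right h] at hmin_le
      simp only [one_mul]
      linarith
  · -- a = 0 : lamStar ≤ 1 - ε
    rw [if_neg hcase]
    push_neg at hcase
    set b : ℝ := 1 - ε/2 with hbdef
    have hb1 : b < 1 := by rw [hbdef]; linarith
    set T : Set ℝ := Set.Icc 0 b ∩ r ⁻¹' {pi0StarSU F} with hTdef
    have hTclosed : IsClosed T :=
      (hrcont b hb1).preimage_isClosed_of_isClosed isClosed_Icc isClosed_singleton
    have hSne : S.Nonempty := by
      rcases Set.eq_empty_or_nonempty S with h | h
      · exfalso
        rw [hlamstar, h, Set.empty_union, csInf_singleton] at hcase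
        linarith
      · exact h
    have hSinf : sInf S ≤ 1 - ε := by
      have hsingbdd : BddBelow ({1} : Set ℝ) := ⟨1, fun x hx => by rw [Set.mem_singleton_iff] at hx; rw [hx]⟩
      have hsingne : ({1} : Set ℝ).Nonempty := ⟨1, rfl⟩
      rw [hlamstar, csInf_union hSbdd hSne hsingbdd hsingne, csInf_singleton] at hcase
      rcases le_total (sInf S) 1 with h | h
      · rwa [min_eq_left h] at hcase
      · rw [min_eq_right h] at hcase; linarith
    have hTget : ∀ δ : ℝ, 0 < δ → δ ≤ ε/2 → ∃ x ∈ T, x < 1 - ε + δ := by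
      intro δ hδ hδ2
      obtain ⟨x, hxS, hxlt⟩ := exists_lt_of_csInf_lt hSne
        (show sInf S < sInf S + δ by linarith)
      have hxb : x ≤ b := by rw [hbdef]; linarith [hSinf]
      exact ⟨x, ⟨⟨hxS.1.1, hxb⟩, hxS.2⟩, by linarith [hSinf]⟩
    have hTne : T.Nonempty := by
      obtain ⟨x, hx, _⟩ := hTget (ε/2) (by linarith) le_rfl
      exact ⟨x, hx⟩
    have hTbdd : BddBelow T := ⟨0, fun x hx => hx.1.1⟩
    have hc0 : sInf T ∈ T := hTclosed.csInf_mem hTne hTbdd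
    have hc0le : sInf T ≤ 1 - ε := by
      refine le_of_forall_pos_le_add (fun δ hδ => ?_)
      rcases le_total δ (ε/2) with h | h
      · obtain ⟨x, hxT, hxlt⟩ := hTget δ hδ h
        linarith [csInf_le hTbdd hxT]
      · obtain ⟨x, hxT, hxlt⟩ := hTget (ε/2) (by linarith) le_rfl
        have := csInf_le hTbdd hxT
        linarith
    refine ⟨sInf T, ⟨hc0.1.1, hc0le⟩, ?_⟩
    have : r (sInf T) = pi0StarSU F := hc0.2
    rw [hrdef] at this
    simp only at this
    rw [this]
    simp

end AuxiliaryLemmas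

set_option maxHeartbeats 1000000 in
/-- Proposition 8(i): concentration of the min-Storey estimator below
`π₀*(θ)` in the independent two-group model over `Θ_{⪰U}`. -/
theorem statement14 {Ω : Type*} [MeasurableSpace Ω] (μ : Measure Ω) [IsProbabilityMeasure μ]
    (m : ℕ) (hm : 1 ≤ m)
    -- the parameter θ = (π0, F0, F1) ∈ Θ_{⪰U}, with mixture CDF F of Lipschitz density f
    (π0 : ℝ) (hπ0 : π0 ∈ Set.Ioc (0 : ℝ) 1) (F0 F1 F f : ℝ → ℝ)
    (hF0 : IsCDF01 F0) (hF1 : IsCDF01 F1)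
    (hsup : ∀ x ∈ Set.Icc (0 : ℝ) 1, F0 x ≤ x)
    (hF : ∀ x ∈ Set.Icc (0 : ℝ) 1, F x = π0 * F0 x + (1 - π0) * F1 x)
    (L : ℝ) (hL : 0 ≤ L) (hfLip : LipschitzOnWith (Real.toNNReal L) f (Set.Icc 0 1))
    (hf_nonneg : ∀ x ∈ Set.Icc (0 : ℝ) 1, 0 ≤ f x)
    (hf_dens : ∀ x ∈ Set.Icc (0 : ℝ) 1, F x = ∫ t in (0 : ℝ)..x, f t)
    -- the p-values, i.i.d. with CDF F
    (p : Ω → Fin m → ℝ) (hmodel : IIDModel μ m p F)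
    -- parameters of the MS estimator
    (ε pl : ℝ) (hε : ε ∈ Set.Ioo (0 : ℝ) 1) (hpl : pl ∈ Set.Ioo (0 : ℝ) 1)
    (hpl_lt : pl < pi0StarSU F)
    (a : ℝ) (ha : a = if 1 - ε < lamStarSU F then 1 else 0)
    (Δ : ℝ) (hΔ : Δ ∈ Set.Icc (0 : ℝ) 1) (hCΔ : Cfac m ε pl - 1 ≤ Δ)
    (hmε : (1 + Δ) / m < pi0StarSU F * ε) :
    μ {ω | pi0StarSU F + 4 * pi0StarSU F * Δ + 2 * a * L * ε ≤ msEst m ε pl (p ω)} ≤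
      ENNReal.ofReal (Real.exp (-2 * m * ε ^ 2 * Δ ^ 2 * pi0StarSU F ^ 2)) := by
  obtain ⟨hpmeas, hp01, hpind, hpcdf⟩ := hmodel
  have hπpos : 0 < pi0StarSU F := lt_trans hpl.1 hpl_lt
  have hε0 := hε.1
  have hε1 := hε.2
  have hmpos : (0:ℝ) < m := by exact_mod_cast hm
  -- trivial case Δ = 0
  rcases eq_or_lt_of_le hΔ.1 with hΔ0 | hΔpos
  · have hz : (-2 * (m:ℝ) * ε ^ 2 * Δ ^ 2 * pi0StarSU F ^ 2) = 0 := by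
      rw [← hΔ0]; ring
    rw [hz, Real.exp_zero, ENNReal.ofReal_one]
    exact prob_le_one
  -- basic facts about F
  have hF1' : F 1 = 1 := by
    rw [hF 1 (by norm_num), hF0.2.2.1, hF1.2.2.1]; ring
  have hF0' : F 0 = 0 := by
    rw [hf_dens 0 (by norm_num), intervalIntegral.integral_same]
  set M : ℝ := f 0 + L with hMdef
  have hM : 0 ≤ M := add_nonneg (hf_nonneg 0 (by norm_num)) hL
  have hFd := F_diff F f L hL hfLip hf_nonneg hf_dens
  rw [show f 0 + L = M from hMdef.symm] at hFd
  have hmonoF : MonotoneOn F (Set.Icc 0 1) := fun x hx y hy hxy => by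
    linarith [(hFd x hx y hy hxy).1]
  have hFlipOn : LipschitzOnWith (Real.toNNReal M) F (Set.Icc 0 1) := by
    refine LipschitzOnWith.of_dist_le_mul (fun x hx y hy => ?_)
    rw [Real.dist_eq, Real.dist_eq, Real.coe_toNNReal M hM]
    rcases le_total x y with h | h
    · have h1 := (hFd x hx y hy h).1
      have h2 := (hFd x hx y hy h).2
      rw [abs_of_nonpos (by linarith), abs_of_nonpos (by linarith)]
      linarith
    · have h1 := (hFd y hy x hx h).1
      have h2 := (hFd y hy x hx h).2
      rw [abs_of_nonneg (by linarith), abs_of_nonneg (by linarith)]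
      linarith
  have hFcont : ContinuousOn F (Set.Icc 0 1) := hFlipOn.continuousOn
  obtain ⟨lam0, hlam0, hr0⟩ :=
    exists_lam0 F f L ε hL hε hFcont hmonoF hF1' hfLip hf_nonneg hf_dens
  rw [← ha] at hr0
  have hlam00 : 0 ≤ lam0 := hlam0.1
  have hlam0e : lam0 ≤ 1 - ε := hlam0.2
  have hlam01 : lam0 ∈ Set.Icc (0:ℝ) 1 := ⟨hlam00, by linarith⟩
  have ha01 : 0 ≤ a := by rw [ha]; split <;> norm_num
  have haLε : 0 ≤ a * L * ε := mul_nonneg (mul_nonneg ha01 hL) hε0.le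
  set q0 : ℝ := 1 - F lam0 with hq0def
  have hFlam0_nonneg : 0 ≤ F lam0 := by
    have := (hFd 0 (by norm_num) lam0 hlam01 hlam00).1
    linarith [hF0']
  have hFlam0_le1 : F lam0 ≤ 1 := by
    have := (hFd lam0 hlam01 1 (by norm_num) (by linarith)).1
    linarith [hF1']
  have hq00 : 0 ≤ q0 := by rw [hq0def]; linarith
  have hq01 : q0 ≤ 1 := by rw [hq0def]; linarith
  set t : ℝ := ε * Δ * pi0StarSU F with htdef
  have ht : 0 ≤ t := by
    rw [htdef]
    exact mul_nonneg (mul_nonneg hε0.le hΔ.1) hπpos.le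
  -- the indicator variables
  have hpim : ∀ i, Measurable (fun ω => p ω i) :=
    fun i => (measurable_pi_apply i).comp hpmeas
  set X : Fin m → Ω → ℝ := fun i ω => if lam0 ≤ p ω i then 1 else 0 with hXdef
  have hgmeas : Measurable (fun x : ℝ => if lam0 ≤ x then (1:ℝ) else 0) :=
    Measurable.ite measurableSet_Ici measurable_const measurable_const
  have hXmeas : ∀ i, Measurable (X i) := fun i => hgmeas.comp (hpim i)
  have hXind : iIndepFun X μ :=
    hpind.comp (fun _ x => if lam0 ≤ x then (1:ℝ) else 0) (fun _ => hgmeas)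
  have hval : ∀ i ω, X i ω = 0 ∨ X i ω = 1 := by
    intro i ω
    by_cases h : lam0 ≤ p ω i
    · exact Or.inr (if_pos h)
    · exact Or.inl (if_neg h)
  have hAset : ∀ i, {ω | X i ω = 1} = {ω | lam0 ≤ p ω i} := by
    intro i
    ext ω
    simp only [Set.mem_setOf_eq, hXdef]
    by_cases h : lam0 ≤ p ω i <;> simp [h]
  have hkey : ∀ i : Fin m, ∀ τ : ℝ, 0 ≤ τ → τ ≤ 1 → τ < lam0 →
      (μ {ω | lam0 ≤ p ω i}).toReal ≤ 1 - F τ := by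
    intro i τ hτ0 hτ1 hτlt
    have hB : MeasurableSet {ω | p ω i ≤ τ} := measurableSet_le (hpim i) measurable_const
    have hdisj : Disjoint {ω | lam0 ≤ p ω i} {ω | p ω i ≤ τ} := by
      rw [Set.disjoint_left]
      intro ω h1 h2
      simp only [Set.mem_setOf_eq] at h1 h2
      linarith
    have hui : μ {ω | lam0 ≤ p ω i} + μ {ω | p ω i ≤ τ} ≤ 1 := by
      rw [← measure_union hdisj hB]
      exact le_trans (measure_mono (Set.subset_univ _)) (le_of_eq measure_univ)
    rw [hpcdf i τ ⟨hτ0, hτ1⟩] at hui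
    have hFτ0 : 0 ≤ F τ := by
      have := (hFd 0 (by norm_num) τ ⟨hτ0, hτ1⟩ hτ0).1
      linarith [hF0']
    have h1 := ENNReal.toReal_mono ENNReal.one_ne_top hui
    rw [ENNReal.toReal_add (measure_ne_top μ _) ENNReal.ofReal_ne_top, ENNReal.toReal_one,
      ENNReal.toReal_ofReal hFτ0] at h1
    linarith
  have hq_i : ∀ i, (μ {ω | X i ω = 1}).toReal ≤ q0 := by
    intro i
    rw [hAset i]
    rcases eq_or_lt_of_le hlam00 with h0 | h0
    · have hFl0 : F lam0 = 0 := by rw [← h0, hF0']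
      have hle1 : (μ {ω | lam0 ≤ p ω i}).toReal ≤ 1 := by
        rw [← ENNReal.toReal_one]
        exact ENNReal.toReal_mono ENNReal.one_ne_top
          (le_trans (measure_mono (Set.subset_univ _)) (le_of_eq measure_univ))
      rw [hq0def, hFl0]
      linarith
    · refine le_of_forall_pos_le_add (fun η hη => ?_)
      set δ : ℝ := min lam0 (η / (M + 1)) with hδdef
      have hδpos : 0 < δ := lt_min h0 (div_pos hη (by linarith))
      have hδle : δ ≤ lam0 := min_le_left _ _
      have hδle2 : δ ≤ η / (M + 1) := min_le_right _ _
      have hτmem : lam0 - δ ∈ Set.Icc (0:ℝ) 1 := ⟨by linarith, by linarith [hlam01.2]⟩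
      have h1 := hkey i (lam0 - δ) (by linarith) (by linarith [hlam01.2]) (by linarith)
      have h2 := (hFd (lam0 - δ) hτmem lam0 hlam01 (by linarith)).2
      rw [show lam0 - (lam0 - δ) = δ by ring] at h2
      have h3 : M * δ ≤ η := by
        have h4 := mul_le_mul_of_nonneg_left hδle2 (by linarith : (0:ℝ) ≤ M + 1)
        have he : (M + 1) * (η / (M + 1)) = η := by
          field_simp
        rw [he] at h4
        linarith [hδpos.le]
      rw [hq0def]
      linarith
  have hcher := chernoff_bernoulli μ m X hXind hXmeas hval q0 hq00 hq01 hq_i t ht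
  -- event inclusion
  have hπT : pi0StarSU F ≤ pi0StarSU F + 4 * pi0StarSU F * Δ + 2 * a * L * ε := by
    linarith [mul_nonneg (mul_nonneg (show (0:ℝ) ≤ 4 by norm_num) hπpos.le) hΔ.1, haLε]
  have hsub : {ω | pi0StarSU F + 4 * pi0StarSU F * Δ + 2 * a * L * ε ≤ msEst m ε pl (p ω)} ⊆
      {ω | (m : ℝ) * (q0 + t) ≤ ∑ i, X i ω} := by
    intro ω hω
    simp only [Set.mem_setOf_eq] at hω ⊢
    set T : ℝ := pi0StarSU F + 4 * pi0StarSU F * Δ + 2 * a * L * ε with hTdef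
    set N : ℕ := (Finset.univ.filter fun i => lam0 ≤ p ω i).card with hNdef
    have hsumX : ∑ i, X i ω = (N : ℝ) := by
      simp only [hXdef]
      rw [Finset.sum_boole]
    have hD0 : (0:ℝ) < (m : ℝ) * (1 - lam0) := mul_pos hmpos (by linarith)
    -- msInf bounds
    have hEbdd : BddBelow ((fun lam =>
        (max 1 ((Finset.univ.filter fun i => lam ≤ p ω i).card : ℝ)) / (m * (1 - lam))) ''
          Set.Icc 0 (1 - ε)) := by
      refine ⟨0, fun y hy => ?_⟩
      obtain ⟨lam, hlam, rfl⟩ := hy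
      have hd : (0:ℝ) ≤ (m : ℝ) * (1 - lam) :=
        mul_nonneg hmpos.le (by linarith [hlam.2])
      exact div_nonneg (le_trans zero_le_one (le_max_left _ _)) hd
    have h1 : msInf m ε (p ω) ≤
        (max 1 (N : ℝ)) / ((m : ℝ) * (1 - lam0)) := by
      have := csInf_le hEbdd (Set.mem_image_of_mem
        (fun lam => (max 1 ((Finset.univ.filter fun i => lam ≤ p ω i).card : ℝ)) /
          (m * (1 - lam))) (⟨hlam00, hlam0e⟩ : lam0 ∈ Set.Icc (0:ℝ) (1 - ε)))
      exact this
    have h2 : 1 / (m : ℝ) ≤ msInf m ε (p ω) := by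
      refine le_csInf ⟨_, Set.mem_image_of_mem _ (⟨le_rfl, by linarith⟩ :
        (0:ℝ) ∈ Set.Icc (0:ℝ) (1 - ε))⟩ (fun y hy => ?_)
      obtain ⟨lam, hlam, rfl⟩ := hy
      have hd1 : (0:ℝ) < (m : ℝ) * (1 - lam) := mul_pos hmpos (by linarith [hlam.2])
      rw [div_le_div_iff₀ hmpos hd1]
      have hmax : (1:ℝ) ≤ max 1 ((Finset.univ.filter fun i => lam ≤ p ω i).card : ℝ) :=
        le_max_left _ _
      linarith [mul_nonneg (sub_nonneg.mpr hmax) hmpos.le, mul_nonneg hlam.1 hmpos.le]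
    have hmsnn : 0 ≤ msInf m ε (p ω) := le_trans (by positivity) h2
    have hω' : T ≤ max pl (Cfac m ε pl * msInf m ε (p ω)) := hω
    have hTC : T ≤ Cfac m ε pl * msInf m ε (p ω) := by
      rcases le_max_iff.mp hω' with h | h
      · exfalso; rw [hTdef] at h; linarith [hpl_lt, hπT]
      · exact h
    have hCpos : 0 < Cfac m ε pl := by
      by_contra hC
      push_neg at hC
      have hneg : Cfac m ε pl * msInf m ε (p ω) ≤ 0 := mul_nonpos_iff.mpr (Or.inr ⟨hC, hmsnn⟩)
      rw [hTdef] at hTC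
      linarith [hπpos, hπT]
    have hCle : Cfac m ε pl ≤ 1 + Δ := by linarith
    have hvnn : 0 ≤ (max 1 (N : ℝ)) / ((m : ℝ) * (1 - lam0)) :=
      div_nonneg (le_trans zero_le_one (le_max_left _ _)) hD0.le
    have hchain : T ≤ (1 + Δ) * ((max 1 (N : ℝ)) / ((m : ℝ) * (1 - lam0))) := by
      calc T ≤ Cfac m ε pl * msInf m ε (p ω) := hTC
        _ ≤ Cfac m ε pl * ((max 1 (N : ℝ)) / ((m : ℝ) * (1 - lam0))) :=
            mul_le_mul_of_nonneg_left h1 hCpos.le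
        _ ≤ (1 + Δ) * ((max 1 (N : ℝ)) / ((m : ℝ) * (1 - lam0))) :=
            mul_le_mul_of_nonneg_right hCle hvnn
    have hTD : T * ((m : ℝ) * (1 - lam0)) ≤ (1 + Δ) * max 1 (N : ℝ) := by
      rw [← mul_div_assoc] at hchain
      exact (le_div_iff₀ hD0).mp hchain
    have hmε' : 1 + Δ < pi0StarSU F * ε * (m : ℝ) := by
      rw [div_lt_iff₀ hmpos] at hmε
      linarith
    have hN1 : (1:ℝ) ≤ (N : ℝ) := by
      by_contra hN
      push_neg at hN
      rw [max_eq_left hN.le, mul_one] at hTD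
      have e1 : pi0StarSU F * ε * (m : ℝ) ≤ T * ((m : ℝ) * (1 - lam0)) := by
        linarith [mul_nonneg (sub_nonneg.mpr (show pi0StarSU F ≤ T from hπT)) hD0.le,
          mul_nonneg (mul_nonneg hπpos.le hmpos.le) (show (0:ℝ) ≤ 1 - lam0 - ε by linarith)]
      linarith
    rw [max_eq_right hN1] at hTD
    -- key deterministic comparison
    have h1l : (0:ℝ) < 1 - lam0 := by linarith
    have hr0' : q0 ≤ (1 - lam0) * (pi0StarSU F + a * L * ε) := by
      rw [div_le_iff₀ h1l] at hr0
      rw [hq0def]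
      linarith [hr0]
    have hs1 : (1 + Δ) * (pi0StarSU F + a * L * ε + Δ * pi0StarSU F) ≤ T := by
      rw [hTdef]
      linarith [mul_nonneg (mul_nonneg hπpos.le hΔ.1) (show (0:ℝ) ≤ 2 - Δ by linarith [hΔ.2]),
        mul_nonneg haLε (show (0:ℝ) ≤ 1 - Δ by linarith [hΔ.2])]
    have h_t : t ≤ (1 - lam0) * (Δ * pi0StarSU F) := by
      rw [htdef]
      linarith [mul_nonneg (show (0:ℝ) ≤ 1 - lam0 - ε by linarith)
        (mul_nonneg hΔ.1 hπpos.le)]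
    have hkey2 : (1 + Δ) * (q0 + t) ≤ T * (1 - lam0) := by
      calc (1 + Δ) * (q0 + t)
          ≤ (1 + Δ) * ((1 - lam0) * (pi0StarSU F + a * L * ε) + (1 - lam0) * (Δ * pi0StarSU F)) := by
            refine mul_le_mul_of_nonneg_left (by linarith) (by linarith [hΔ.1])
        _ = (1 - lam0) * ((1 + Δ) * (pi0StarSU F + a * L * ε + Δ * pi0StarSU F)) := by ring
        _ ≤ (1 - lam0) * T := mul_le_mul_of_nonneg_left hs1 h1l.le
        _ = T * (1 - lam0) := by ring
    have hfin : (m : ℝ) * (q0 + t) ≤ (N : ℝ) := by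
      have h5 : (1 + Δ) * ((m : ℝ) * (q0 + t)) ≤ (1 + Δ) * (N : ℝ) := by
        calc (1 + Δ) * ((m : ℝ) * (q0 + t)) = (m : ℝ) * ((1 + Δ) * (q0 + t)) := by ring
          _ ≤ (m : ℝ) * (T * (1 - lam0)) := mul_le_mul_of_nonneg_left hkey2 hmpos.le
          _ = T * ((m : ℝ) * (1 - lam0)) := by ring
          _ ≤ (1 + Δ) * (N : ℝ) := hTD
      exact le_of_mul_le_mul_left h5 (by linarith [hΔ.1])
    rw [hsumX]
    exact hfin
  refine le_trans (measure_mono hsub) (le_trans hcher (le_of_eq ?_))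
  congr 2
  rw [htdef]
  ring


end
end
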